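/- arXiv:1909.03339 — 9 statements merged into one kernel-verified Lean document; each statement's English description precedes it below -/
import Mathlib

section
/- Let G=(V,E) be a finite loopless undirected graph, ≺ a linear order on V, and ℓ ≥ 1. Every cycle of the digraph G'(ℓ) contains, for some edge {u,v} ∈ E, both vertex arcs (u_0,u_1) and (v_0,v_1). -/
/-- A digraph on vertex type `W` is given by its arc set `A ⊆ W × W`.
It is acyclic when the transitive closure of its arc relation is irreflexive
(equivalently, it has no cycle). -/
def Acyclic {W : Type*} (A : Set (W × W)) : Prop :=
  ∀ v : W, ¬ Relation.TransGen (fun u w => (u, w) ∈ A) v v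

/-- `F` is a feedback arc set of the digraph with arc set `A`:
`F ⊆ A` and the digraph `(V, A \ F)` is acyclic. -/
def IsFAS {W : Type*} (A F : Set (W × W)) : Prop :=
  F ⊆ A ∧ Acyclic (A \ F)

/-- `C` is a vertex cover of the undirected graph `G`: it meets every edge. -/
def IsVC {V : Type*} (G : SimpleGraph V) (C : Set V) : Prop :=
  ∀ u v : V, G.Adj u v → u ∈ C ∨ v ∈ C

/-- The vertices of the digraph `G'(ℓ)`: two copies `v_0, v_1` of each vertex
`v ∈ V`, and vertices `e_{i,j}` for each edge `e`, `i ∈ {0,1}`, `j ∈ [ℓ]`. -/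
abbrev GPVertex (V : Type*) (ℓ : ℕ) := (V × Fin 2) ⊕ (Sym2 V × Fin 2 × Fin ℓ)

/-- The vertex arcs `(v_0, v_1)` of `G'(ℓ)`. -/
def vertexArcs (V : Type*) (ℓ : ℕ) : Set (GPVertex V ℓ × GPVertex V ℓ) :=
  { p | ∃ v : V, p = (Sum.inl (v, 0), Sum.inl (v, 1)) }

/-- The edge arcs of `G'(ℓ)`: for each edge `{u,v}` of `G` with `u ≺ v` and each
`j ∈ [ℓ]`, the four arcs `(u_1, e_{0,j})`, `(e_{0,j}, v_0)`, `(v_1, e_{1,j})`,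
`(e_{1,j}, u_0)`. -/
def edgeArcs {V : Type*} [LinearOrder V] (G : SimpleGraph V) (ℓ : ℕ) :
    Set (GPVertex V ℓ × GPVertex V ℓ) :=
  { p | ∃ u v : V, G.Adj u v ∧ u < v ∧ ∃ j : Fin ℓ,
      p = (Sum.inl (u, 1), Sum.inr (s(u, v), 0, j)) ∨
      p = (Sum.inr (s(u, v), 0, j), Sum.inl (v, 0)) ∨
      p = (Sum.inl (v, 1), Sum.inr (s(u, v), 1, j)) ∨
      p = (Sum.inr (s(u, v), 1, j), Sum.inl (u, 0)) }

/-- The arc set of the digraph `G'(ℓ)`. -/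
def GPArcs {V : Type*} [LinearOrder V] (G : SimpleGraph V) (ℓ : ℕ) :
    Set (GPVertex V ℓ × GPVertex V ℓ) :=
  vertexArcs V ℓ ∪ edgeArcs G ℓ

/-- A cycle of a digraph with arc set `A`: a nonempty list of arcs of `A`, each
arc's head being the next arc's tail, and the last arc's head being the first
arc's tail. -/
def IsCycle {W : Type*} (A : Set (W × W)) (c : List (W × W)) : Prop :=
  c ≠ [] ∧ (∀ a ∈ c, a ∈ A) ∧ c.Chain' (fun a b => a.2 = b.1) ∧
    ∀ a b : W × W, c.head? = some a → c.getLast? = some b → b.2 = a.1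

/-!
Every edge vertex `e_{i,j}` of `G'(ℓ)` has a single in-arc, from `x_1`, and a single out-arc,
to `y_0`, where `{x, y}` is the edge; moreover `x_1` is entered only by `(x_0, x_1)` and `y_0` is
left only by `(y_0, y_1)`. A cycle cannot use vertex arcs alone, since `v_1` is left only by edge
arcs, so it passes through some `e_{i,j}`; following the forced arcs backwards and forwards from
there, it contains `(x_0, x_1)` and `(y_0, y_1)`.
-/

namespace IsCycle

variable {W : Type*} {A : Set (W × W)} {c : List (W × W)}

theorem exists_next (hc : IsCycle A c) {a : W × W} (ha : a ∈ c) : ∃ b ∈ c, a.2 = b.1 := by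
  obtain ⟨-, -, hchain, hclose⟩ := hc
  obtain ⟨s, t, rfl⟩ := List.append_of_mem ha
  rcases t with _ | ⟨b, t⟩
  · obtain ⟨f, hf⟩ : ∃ f, (s ++ [a]).head? = some f := Option.isSome_iff_exists.mp (by simp)
    exact ⟨f, List.mem_of_mem_head? hf, hclose f a hf (by simp)⟩
  · exact ⟨b, by simp, List.isChain_iff_forall_rel_of_append_cons_cons.mp hchain rfl⟩

theorem exists_prev (hc : IsCycle A c) {a : W × W} (ha : a ∈ c) : ∃ b ∈ c, b.2 = a.1 := by
  obtain ⟨-, -, hchain, hclose⟩ := hc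
  obtain ⟨s, t, rfl⟩ := List.append_of_mem ha
  rcases List.eq_nil_or_concat s with rfl | ⟨s, b, rfl⟩
  · obtain ⟨l, hl⟩ : ∃ l, (a :: t).getLast? = some l := Option.isSome_iff_exists.mp (by simp)
    exact ⟨l, List.mem_of_getLast? hl, hclose a l rfl hl⟩
  · exact ⟨b, by simp,
      List.isChain_iff_forall_rel_of_append_cons_cons.mp hchain (l₁ := s) (l₂ := t) (by simp)⟩

theorem mem_of_forall_fst_eq (hc : IsCycle A c) {a b : W × W} (ha : a ∈ c)
    (hb : ∀ q ∈ A, q.1 = a.2 → q = b) : b ∈ c := by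
  obtain ⟨q, hq, haq⟩ := hc.exists_next ha
  exact hb q (hc.2.1 q hq) haq.symm ▸ hq

theorem mem_of_forall_snd_eq (hc : IsCycle A c) {a b : W × W} (ha : a ∈ c)
    (hb : ∀ q ∈ A, q.2 = a.1 → q = b) : b ∈ c := by
  obtain ⟨q, hq, hqa⟩ := hc.exists_prev ha
  exact hb q (hc.2.1 q hq) hqa ▸ hq

end IsCycle

section GPArcs

variable {V : Type*} [LinearOrder V] {G : SimpleGraph V} {ℓ : ℕ}
  {q : GPVertex V ℓ × GPVertex V ℓ}

theorem eq_vertexArc_of_snd_eq {w : V} (hq : q ∈ GPArcs G ℓ) (h : q.2 = .inl (w, 1)) :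
    q = (.inl (w, 0), .inl (w, 1)) := by
  rcases hq with ⟨v, rfl⟩ | ⟨u, v, -, -, j, rfl | rfl | rfl | rfl⟩ <;> simp_all

theorem eq_vertexArc_of_fst_eq {w : V} (hq : q ∈ GPArcs G ℓ) (h : q.1 = .inl (w, 0)) :
    q = (.inl (w, 0), .inl (w, 1)) := by
  rcases hq with ⟨v, rfl⟩ | ⟨u, v, -, -, j, rfl | rfl | rfl | rfl⟩ <;> simp_all

theorem mem_edgeArcs_of_snd_eq {w : V} (hq : q ∈ GPArcs G ℓ) (h : q.2 = .inl (w, 0)) :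
    q ∈ edgeArcs G ℓ := by
  rcases hq with ⟨v, rfl⟩ | hq
  · simp at h
  · exact hq

theorem eq_edgeArc_of_snd_eq_inr {u v : V} (huv : u < v) {i : Fin 2} {j : Fin ℓ}
    (hq : q ∈ GPArcs G ℓ) (h : q.2 = .inr (s(u, v), i, j)) :
    q = (.inl (![u, v] i, 1), .inr (s(u, v), i, j)) := by
  -- `u < v` rules out matching `s(u', v')` with `s(u, v)` the other way round.
  rcases hq with ⟨w, rfl⟩ | ⟨u', v', -, huv', j', rfl | rfl | rfl | rfl⟩ <;>
    simp at h <;> obtain ⟨⟨rfl, rfl⟩ | ⟨rfl, rfl⟩, rfl, rfl⟩ := h <;>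
    first | rfl | exact absurd huv huv'.asymm

theorem eq_edgeArc_of_fst_eq_inr {u v : V} (huv : u < v) {i : Fin 2} {j : Fin ℓ}
    (hq : q ∈ GPArcs G ℓ) (h : q.1 = .inr (s(u, v), i, j)) :
    q = (.inr (s(u, v), i, j), .inl (![v, u] i, 0)) := by
  rcases hq with ⟨w, rfl⟩ | ⟨u', v', -, huv', j', rfl | rfl | rfl | rfl⟩ <;>
    simp at h <;> obtain ⟨⟨rfl, rfl⟩ | ⟨rfl, rfl⟩, rfl, rfl⟩ := h <;>
    first | rfl | exact absurd huv huv'.asymm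

theorem exists_subdivision_of_mem_edgeArcs {p : GPVertex V ℓ × GPVertex V ℓ}
    (hp : p ∈ edgeArcs G ℓ) :
    ∃ x y : V, G.Adj x y ∧ ∃ z : GPVertex V ℓ,
      (p = (.inl (x, 1), z) ∨ p = (z, .inl (y, 0))) ∧
      (∀ q ∈ GPArcs G ℓ, q.2 = z → q = (.inl (x, 1), z)) ∧
      (∀ q ∈ GPArcs G ℓ, q.1 = z → q = (z, .inl (y, 0))) := by
  obtain ⟨u, v, hadj, huv, j, rfl | rfl | rfl | rfl⟩ := hp
  · exact ⟨u, v, hadj, _, .inl rfl, fun _ => eq_edgeArc_of_snd_eq_inr (i := 0) huv,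
      fun _ => eq_edgeArc_of_fst_eq_inr (i := 0) huv⟩
  · exact ⟨u, v, hadj, _, .inr rfl, fun _ => eq_edgeArc_of_snd_eq_inr (i := 0) huv,
      fun _ => eq_edgeArc_of_fst_eq_inr (i := 0) huv⟩
  · exact ⟨v, u, hadj.symm, _, .inl rfl, fun _ => eq_edgeArc_of_snd_eq_inr (i := 1) huv,
      fun _ => eq_edgeArc_of_fst_eq_inr (i := 1) huv⟩
  · exact ⟨v, u, hadj.symm, _, .inr rfl, fun _ => eq_edgeArc_of_snd_eq_inr (i := 1) huv,
      fun _ => eq_edgeArc_of_fst_eq_inr (i := 1) huv⟩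

theorem IsCycle.exists_mem_edgeArcs {c : List (GPVertex V ℓ × GPVertex V ℓ)}
    (hc : IsCycle (GPArcs G ℓ) c) : ∃ p ∈ c, p ∈ edgeArcs G ℓ := by
  obtain ⟨a, ha⟩ := List.exists_mem_of_ne_nil c hc.1
  obtain ⟨b, hb, hab⟩ := hc.exists_next ha
  rcases hc.2.1 b hb with ⟨w, rfl⟩ | hb'
  · exact ⟨a, ha, mem_edgeArcs_of_snd_eq (hc.2.1 a ha) hab⟩
  · exact ⟨b, hb, hb'⟩

end GPArcs

theorem cycle_contains_both_vertex_arcs_general {V : Type*} [LinearOrder V]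
    (G : SimpleGraph V) (ℓ : ℕ)
    (c : List (GPVertex V ℓ × GPVertex V ℓ)) (hc : IsCycle (GPArcs G ℓ) c) :
    ∃ u v : V, G.Adj u v ∧
      ((Sum.inl (u, 0) : GPVertex V ℓ), (Sum.inl (u, 1) : GPVertex V ℓ)) ∈ c ∧
      ((Sum.inl (v, 0) : GPVertex V ℓ), (Sum.inl (v, 1) : GPVertex V ℓ)) ∈ c := by
  obtain ⟨p, hpc, hp⟩ := hc.exists_mem_edgeArcs
  obtain ⟨x, y, hxy, z, hpz, hin, hout⟩ := exists_subdivision_of_mem_edgeArcs hp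
  have hpath : (.inl (x, 1), z) ∈ c ∧ (z, .inl (y, 0)) ∈ c := by
    rcases hpz with rfl | rfl
    · exact ⟨hpc, hc.mem_of_forall_fst_eq hpc hout⟩
    · exact ⟨hc.mem_of_forall_snd_eq hpc hin, hpc⟩
  exact ⟨x, y, hxy, hc.mem_of_forall_snd_eq hpath.1 fun _ => eq_vertexArc_of_snd_eq,
    hc.mem_of_forall_fst_eq hpath.2 fun _ => eq_vertexArc_of_fst_eq⟩

/-- every cycle of `G'(ℓ)` contains both vertex arcs `(u_0,u_1)`
and `(v_0,v_1)` for some edge `{u,v}` of `G`. -/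
theorem cycle_contains_both_vertex_arcs {V : Type*} [Fintype V] [LinearOrder V]
    (G : SimpleGraph V) (ℓ : ℕ) (hℓ : 1 ≤ ℓ)
    (c : List (GPVertex V ℓ × GPVertex V ℓ)) (hc : IsCycle (GPArcs G ℓ) c) :
    ∃ u v : V, G.Adj u v ∧
      ((Sum.inl (u, 0) : GPVertex V ℓ), (Sum.inl (u, 1) : GPVertex V ℓ)) ∈ c ∧
      ((Sum.inl (v, 0) : GPVertex V ℓ), (Sum.inl (v, 1) : GPVertex V ℓ)) ∈ c :=
  cycle_contains_both_vertex_arcs_general G ℓ c hc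
end

section
/- Let G=(V,E) be a finite loopless undirected graph, ≺ a linear order on V, and ℓ ≥ 1. If C ⊆ V is a vertex cover of G, then the set {(v_0,v_1) : v ∈ C} of vertex arcs is a feedback arc set of the digraph G'(ℓ), and it has cardinality |C|. -/
open Classical in
/-- A rank function on `GPVertex` that strictly increases along every arc of
`G'(ℓ)` minus the vertex arcs of the cover `C`. -/
noncomputable def phiRank {V : Type*} [LinearOrder V] (ℓ : ℕ) (C : Set V) :
    GPVertex V ℓ → ℤ
  | Sum.inl (v, i) =>
      if i = 0 then (if v ∈ C then 10 else 0) else (if v ∈ C then -10 else 1)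
  | Sum.inr (e, i, _) =>
      Sym2.lift ⟨fun x y =>
        if i = 0 then (if min x y ∈ C then (if max x y ∈ C then 0 else -5) else 5)
        else (if max x y ∈ C then (if min x y ∈ C then 0 else -5) else 5),
        by intro x y; simp [min_comm, max_comm]⟩ e

theorem vc_gives_fas_step {V : Type*} [LinearOrder V]
    (G : SimpleGraph V) (ℓ : ℕ) (C : Set V) (hC : IsVC G C)
    (p : GPVertex V ℓ × GPVertex V ℓ)
    (hp : p ∈ GPArcs G ℓ \
      {p : GPVertex V ℓ × GPVertex V ℓ | ∃ v ∈ C, p = (Sum.inl (v, 0), Sum.inl (v, 1))}) :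
    phiRank ℓ C p.1 < phiRank ℓ C p.2 := by
  classical
  obtain ⟨hA, hF⟩ := hp
  rcases hA with ⟨v, rfl⟩ | ⟨u, v, hadj, huv, j, h⟩
  · have hv : v ∉ C := fun hv => hF ⟨v, hv, rfl⟩
    simp [phiRank, hv]
  · have hcov := hC u v hadj
    have hmin : min u v = u := min_eq_left huv.le
    have hmax : max u v = v := max_eq_right huv.le
    rcases h with rfl | rfl | rfl | rfl <;>
      · simp only [phiRank, Sym2.lift_mk, hmin, hmax]
        rcases Classical.em (u ∈ C) with hu | hu <;>
          rcases Classical.em (v ∈ C) with hv | hv <;>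
            simp_all <;> norm_num


/-- if `C` is a vertex cover of `G`, then the corresponding set of
vertex arcs `{(v_0,v_1) : v ∈ C}` is a feedback arc set of `G'(ℓ)` of
cardinality `|C|`. -/

theorem vc_gives_fas {V : Type*} [Fintype V] [LinearOrder V]
    (G : SimpleGraph V) (ℓ : ℕ) (hℓ : 1 ≤ ℓ) (C : Set V) (hC : IsVC G C) :
    IsFAS (GPArcs G ℓ)
        {p : GPVertex V ℓ × GPVertex V ℓ | ∃ v ∈ C, p = (Sum.inl (v, 0), Sum.inl (v, 1))} ∧
      {p : GPVertex V ℓ × GPVertex V ℓ |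
        ∃ v ∈ C, p = (Sum.inl (v, 0), Sum.inl (v, 1))}.ncard = C.ncard := by
  classical
  refine ⟨⟨?_, ?_⟩, ?_⟩
  · rintro p ⟨v, _, rfl⟩
    exact Or.inl ⟨v, rfl⟩
  · intro x hx
    have key : ∀ a b : GPVertex V ℓ,
        Relation.TransGen (fun u w => (u, w) ∈ GPArcs G ℓ \
          {p : GPVertex V ℓ × GPVertex V ℓ |
            ∃ v ∈ C, p = (Sum.inl (v, 0), Sum.inl (v, 1))}) a b →
        phiRank ℓ C a < phiRank ℓ C b := by
      intro a b h
      induction h with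
      | single h => exact vc_gives_fas_step G ℓ C hC _ h
      | tail _ h ih => exact ih.trans (vc_gives_fas_step G ℓ C hC _ h)
    exact lt_irrefl _ (key x x hx)
  · have : {p : GPVertex V ℓ × GPVertex V ℓ |
        ∃ v ∈ C, p = (Sum.inl (v, 0), Sum.inl (v, 1))} =
        (fun v : V => ((Sum.inl (v, 0), Sum.inl (v, 1)) :
          GPVertex V ℓ × GPVertex V ℓ)) '' C := by
      ext p
      constructor
      · rintro ⟨v, hv, rfl⟩; exact ⟨v, hv, rfl⟩
      · rintro ⟨v, hv, rfl⟩; exact ⟨v, hv, rfl⟩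
    rw [this]
    exact Set.ncard_image_of_injective C (by intro a b h; simpa using h)
end

section
/- Let G=(V,E) be a finite loopless undirected graph, ≺ a linear order on V, and ℓ ≥ 1. If F is a feedback arc set of the digraph G'(ℓ) with |F| < ℓ, then for every edge {u,v} ∈ E, F contains the vertex arc (u_0,u_1) or the vertex arc (v_0,v_1); consequently the set {v ∈ V : (v_0,v_1) ∈ F} is a vertex cover of G of cardinality at most |F|. -/
/-- Extract the `Fin ℓ` index of an arc whose source or target is an edge vertex. -/
def getJ {V : Type*} {ℓ : ℕ} (p : GPVertex V ℓ × GPVertex V ℓ) : Option (Fin ℓ) :=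
  match p.2 with
  | Sum.inr (_, _, j) => some j
  | Sum.inl _ =>
    match p.1 with
    | Sum.inr (_, _, j) => some j
    | Sum.inl _ => none

lemma forced_edge_arc {V : Type*} [LinearOrder V]
    {G : SimpleGraph V} {ℓ : ℕ}
    {F : Set (GPVertex V ℓ × GPVertex V ℓ)} (hF : IsFAS (GPArcs G ℓ) F)
    {u v : V} (huv : G.Adj u v) (hlt : u < v)
    (hu : ((Sum.inl (u, 0) : GPVertex V ℓ), (Sum.inl (u, 1) : GPVertex V ℓ)) ∉ F)
    (hv : ((Sum.inl (v, 0) : GPVertex V ℓ), (Sum.inl (v, 1) : GPVertex V ℓ)) ∉ F)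
    (j : Fin ℓ) :
    ((Sum.inl (u, 1) : GPVertex V ℓ), (Sum.inr (s(u, v), 0, j) : GPVertex V ℓ)) ∈ F ∨
    ((Sum.inr (s(u, v), 0, j) : GPVertex V ℓ), (Sum.inl (v, 0) : GPVertex V ℓ)) ∈ F ∨
    ((Sum.inl (v, 1) : GPVertex V ℓ), (Sum.inr (s(u, v), 1, j) : GPVertex V ℓ)) ∈ F ∨
    ((Sum.inr (s(u, v), 1, j) : GPVertex V ℓ), (Sum.inl (u, 0) : GPVertex V ℓ)) ∈ F := by
  by_contra h
  push_neg at h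
  obtain ⟨h2, h3, h5, h6⟩ := h
  apply hF.2 (Sum.inl (u, 0))
  have mA : ∀ p : GPVertex V ℓ × GPVertex V ℓ,
      (p = (Sum.inl (u, 1), Sum.inr (s(u, v), 0, j)) ∨
       p = (Sum.inr (s(u, v), 0, j), Sum.inl (v, 0)) ∨
       p = (Sum.inl (v, 1), Sum.inr (s(u, v), 1, j)) ∨
       p = (Sum.inr (s(u, v), 1, j), Sum.inl (u, 0))) → p ∈ GPArcs G ℓ := by
    intro p hp
    exact Or.inr ⟨u, v, huv, hlt, j, hp⟩
  refine Relation.TransGen.head ⟨Or.inl ⟨u, rfl⟩, hu⟩ ?_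
  refine Relation.TransGen.head ⟨mA _ (Or.inl rfl), h2⟩ ?_
  refine Relation.TransGen.head ⟨mA _ (Or.inr (Or.inl rfl)), h3⟩ ?_
  refine Relation.TransGen.head ⟨Or.inl ⟨v, rfl⟩, hv⟩ ?_
  refine Relation.TransGen.head ⟨mA _ (Or.inr (Or.inr (Or.inl rfl))), h5⟩ ?_
  exact Relation.TransGen.single ⟨mA _ (Or.inr (Or.inr (Or.inr rfl))), h6⟩

/-- if `F` is a feedback arc set of `G'(ℓ)` with `|F| < ℓ`, then
for every edge `{u,v}` of `G`, `F` contains the vertex arc `(u_0,u_1)` or the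
vertex arc `(v_0,v_1)`; consequently `{v : (v_0,v_1) ∈ F}` is a vertex cover of
`G` of cardinality at most `|F|`. -/
theorem small_fas_gives_vc {V : Type*} [Fintype V] [LinearOrder V]
    (G : SimpleGraph V) (ℓ : ℕ) (hℓ : 1 ≤ ℓ)
    (F : Set (GPVertex V ℓ × GPVertex V ℓ)) (hF : IsFAS (GPArcs G ℓ) F)
    (hcard : F.ncard < ℓ) :
    (∀ u v : V, G.Adj u v →
        ((Sum.inl (u, 0) : GPVertex V ℓ), (Sum.inl (u, 1) : GPVertex V ℓ)) ∈ F ∨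
        ((Sum.inl (v, 0) : GPVertex V ℓ), (Sum.inl (v, 1) : GPVertex V ℓ)) ∈ F) ∧
      IsVC G {v : V | ((Sum.inl (v, 0) : GPVertex V ℓ), (Sum.inl (v, 1) : GPVertex V ℓ)) ∈ F} ∧
      {v : V | ((Sum.inl (v, 0) : GPVertex V ℓ),
        (Sum.inl (v, 1) : GPVertex V ℓ)) ∈ F}.ncard ≤ F.ncard := by
  classical
  have key : ∀ u v : V, G.Adj u v → u < v →
      ((Sum.inl (u, 0) : GPVertex V ℓ), (Sum.inl (u, 1) : GPVertex V ℓ)) ∈ F ∨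
      ((Sum.inl (v, 0) : GPVertex V ℓ), (Sum.inl (v, 1) : GPVertex V ℓ)) ∈ F := by
    intro u v huv hlt
    by_contra h
    push_neg at h
    obtain ⟨hu, hv⟩ := h
    -- for each j, F contains one of the 4 edge arcs with index j
    have hsel : ∀ j : Fin ℓ, ∃ a ∈ F, getJ a = some j := by
      intro j
      rcases forced_edge_arc hF huv hlt hu hv j with h | h | h | h
      · exact ⟨_, h, rfl⟩
      · exact ⟨_, h, rfl⟩
      · exact ⟨_, h, rfl⟩
      · exact ⟨_, h, rfl⟩
    choose f hfF hfJ using hsel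
    have hinj : Function.Injective fun j : Fin ℓ => (⟨f j, hfF j⟩ : F) := by
      intro j1 j2 hj
      have : getJ (f j1) = getJ (f j2) := by
        simp only [Subtype.mk.injEq] at hj
        rw [hj]
      rw [hfJ, hfJ] at this
      exact Option.some_injective _ this
    have hfin : Finite (↥F) := Subtype.finite
    have := Nat.card_le_card_of_injective _ hinj
    rw [Nat.card_eq_fintype_card, Fintype.card_fin, Nat.card_coe_set_eq] at this
    omega
  have key' : ∀ u v : V, G.Adj u v →
      ((Sum.inl (u, 0) : GPVertex V ℓ), (Sum.inl (u, 1) : GPVertex V ℓ)) ∈ F ∨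
      ((Sum.inl (v, 0) : GPVertex V ℓ), (Sum.inl (v, 1) : GPVertex V ℓ)) ∈ F := by
    intro u v huv
    rcases lt_trichotomy u v with h | h | h
    · exact key u v huv h
    · exact absurd h huv.ne
    · exact (key v u huv.symm h).symm
  refine ⟨key', key', ?_⟩
  have hFfin : F.Finite := Set.toFinite F
  exact Set.ncard_le_ncard_of_injOn
    (fun v => ((Sum.inl (v, 0) : GPVertex V ℓ), (Sum.inl (v, 1) : GPVertex V ℓ)))
    (fun v hv => hv)
    (fun a _ b _ hab => by simpa using congrArg Prod.fst hab)
    hFfin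
end

section
/- Let G=(V,E) be a finite loopless undirected graph, ≺ a linear order on V, and ℓ ≥ 2. Every feedback arc set of G'(ℓ) of minimum cardinality consists only of vertex arcs, i.e., it contains no edge arc. -/
namespace Relation

variable {α : Type*} {r : α → α → Prop} {a b z : α}

theorem TransGen.restrict_reflTransGen_swap (hab : TransGen r a b) (hba : ReflTransGen r b a) :
    TransGen (fun p q => r p q ∧ ReflTransGen r q p) a b := by
  induction hab with
  | single h => exact .single ⟨h, hba⟩
  | tail hac hcb ih => exact (ih (.head hcb hba)).tail ⟨hcb, hba.trans hac.to_reflTransGen⟩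

theorem ReflTransGen.head_of_forall_eq (h : ReflTransGen r a z) (haz : a ≠ z)
    (hb : ∀ c, r a c → c = b) : r a b ∧ ReflTransGen r b z := by
  obtain rfl | ⟨c, hac, hcz⟩ := h.cases_head
  · exact absurd rfl haz
  · obtain rfl := hb c hac
    exact ⟨hac, hcz⟩

theorem ReflTransGen.tail_of_forall_eq (h : ReflTransGen r z a) (hza : z ≠ a)
    (hb : ∀ c, r c a → c = b) : ReflTransGen r z b ∧ r b a := by
  obtain rfl | ⟨c, hzc, hca⟩ := h.cases_tail
  · exact absurd rfl hza
  · obtain rfl := hb c hca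
    exact ⟨hzc, hca⟩

end Relation

open Relation

theorem Acyclic.of_cycle_arcs_mem {W : Type*} {B C : Set (W × W)} (hC : Acyclic C)
    (h : ∀ p q, (p, q) ∈ B → ReflTransGen (fun u w => (u, w) ∈ B) q p → (p, q) ∈ C) :
    Acyclic B := fun x hx =>
  hC x (TransGen.mono (fun _ _ hpq => h _ _ hpq.1 hpq.2) _ _ (hx.restrict_reflTransGen_swap .refl))

section Gadget

variable {V : Type*} {ℓ : ℕ}

def vertexArc (ℓ : ℕ) (v : V) : GPVertex V ℓ × GPVertex V ℓ :=
  (Sum.inl (v, 0), Sum.inl (v, 1))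

def edgeArcsAt (u v : V) (j : Fin ℓ) : Set (GPVertex V ℓ × GPVertex V ℓ) :=
  {(Sum.inl (u, 1), Sum.inr (s(u, v), 0, j)), (Sum.inr (s(u, v), 0, j), Sum.inl (v, 0)),
    (Sum.inl (v, 1), Sum.inr (s(u, v), 1, j)), (Sum.inr (s(u, v), 1, j), Sum.inl (u, 0))}

theorem vertexArc_notMem_edgeArcsAt (w u v : V) (j : Fin ℓ) :
    vertexArc ℓ w ∉ edgeArcsAt u v j := by
  simp [vertexArc, edgeArcsAt]

theorem eq_of_mem_edgeArcsAt_of_mem_edgeArcsAt {u v : V} {j j' : Fin ℓ}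
    {p : GPVertex V ℓ × GPVertex V ℓ} (h : p ∈ edgeArcsAt u v j) (h' : p ∈ edgeArcsAt u v j') :
    j = j' := by
  simp only [edgeArcsAt, Set.mem_insert_iff, Set.mem_singleton_iff] at h h'
  rcases h with rfl | rfl | rfl | rfl <;> simp_all [Prod.ext_iff]

variable [LinearOrder V] {G : SimpleGraph V}

theorem mem_edgeArcs {p : GPVertex V ℓ × GPVertex V ℓ} :
    p ∈ edgeArcs G ℓ ↔ ∃ u v, G.Adj u v ∧ u < v ∧ ∃ j, p ∈ edgeArcsAt u v j :=
  Iff.rfl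

theorem edgeArcsAt_subset_gpArcs {u v : V} (hadj : G.Adj u v) (huv : u < v) (j : Fin ℓ) :
    edgeArcsAt u v j ⊆ GPArcs G ℓ :=
  fun _ hp => Or.inr ⟨u, v, hadj, huv, j, hp⟩

theorem vertexArc_mem_gpArcs (v : V) : vertexArc ℓ v ∈ GPArcs G ℓ :=
  Or.inl ⟨v, rfl⟩

theorem eq_of_inl_zero_mem_gpArcs {w : V} {q : GPVertex V ℓ}
    (h : (Sum.inl (w, 0), q) ∈ GPArcs G ℓ) : q = Sum.inl (w, 1) := by
  rcases h with ⟨_, h⟩ | ⟨_, _, -, _, _, h⟩ <;> grind [Sym2.eq_iff]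

theorem eq_of_mem_gpArcs_inl_one {w : V} {p : GPVertex V ℓ}
    (h : (p, Sum.inl (w, 1)) ∈ GPArcs G ℓ) : p = Sum.inl (w, 0) := by
  rcases h with ⟨_, h⟩ | ⟨_, _, -, _, _, h⟩ <;> grind [Sym2.eq_iff]

variable {u v : V} {j : Fin ℓ}

theorem eq_of_inr_zero_mem_gpArcs (huv : u < v) {q : GPVertex V ℓ}
    (h : (Sum.inr (s(u, v), 0, j), q) ∈ GPArcs G ℓ) : q = Sum.inl (v, 0) := by
  rcases h with ⟨_, h⟩ | ⟨_, _, -, _, _, h⟩ <;> grind [Sym2.eq_iff]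

theorem eq_of_mem_gpArcs_inr_zero (huv : u < v) {p : GPVertex V ℓ}
    (h : (p, Sum.inr (s(u, v), 0, j)) ∈ GPArcs G ℓ) : p = Sum.inl (u, 1) := by
  rcases h with ⟨_, h⟩ | ⟨_, _, -, _, _, h⟩ <;> grind [Sym2.eq_iff]

theorem eq_of_inr_one_mem_gpArcs (huv : u < v) {q : GPVertex V ℓ}
    (h : (Sum.inr (s(u, v), 1, j), q) ∈ GPArcs G ℓ) : q = Sum.inl (u, 0) := by
  rcases h with ⟨_, h⟩ | ⟨_, _, -, _, _, h⟩ <;> grind [Sym2.eq_iff]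

theorem eq_of_mem_gpArcs_inr_one (huv : u < v) {p : GPVertex V ℓ}
    (h : (p, Sum.inr (s(u, v), 1, j)) ∈ GPArcs G ℓ) : p = Sum.inl (v, 1) := by
  rcases h with ⟨_, h⟩ | ⟨_, _, -, _, _, h⟩ <;> grind [Sym2.eq_iff]

theorem vertexArcs_mem_of_reflTransGen {B : Set (GPVertex V ℓ × GPVertex V ℓ)}
    (hB : B ⊆ GPArcs G ℓ) (huv : u < v) {p q : GPVertex V ℓ} (hpq : (p, q) ∈ edgeArcsAt u v j)
    (hqp : ReflTransGen (fun a b => (a, b) ∈ B) q p) :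
    vertexArc ℓ u ∈ B ∧ vertexArc ℓ v ∈ B := by
  have hv0 (w : V) c (h : (Sum.inl (w, 0), c) ∈ B) := eq_of_inl_zero_mem_gpArcs (hB h)
  have hv1 (w : V) c (h : (c, Sum.inl (w, 1)) ∈ B) := eq_of_mem_gpArcs_inl_one (hB h)
  have he0 c (h : (Sum.inr (s(u, v), 0, j), c) ∈ B) := eq_of_inr_zero_mem_gpArcs huv (hB h)
  have he0' c (h : (c, Sum.inr (s(u, v), 0, j)) ∈ B) := eq_of_mem_gpArcs_inr_zero huv (hB h)
  have he1 c (h : (Sum.inr (s(u, v), 1, j), c) ∈ B) := eq_of_inr_one_mem_gpArcs huv (hB h)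
  have he1' c (h : (c, Sum.inr (s(u, v), 1, j)) ∈ B) := eq_of_mem_gpArcs_inr_one huv (hB h)
  simp only [edgeArcsAt, Set.mem_insert_iff, Set.mem_singleton_iff, Prod.mk.injEq] at hpq
  rcases hpq with ⟨rfl, rfl⟩ | ⟨rfl, rfl⟩ | ⟨rfl, rfl⟩ | ⟨rfl, rfl⟩
  · have hvu := (hqp.head_of_forall_eq (by simp) he0).2
    exact ⟨(hqp.tail_of_forall_eq (by simp) (hv1 u)).2, (hvu.head_of_forall_eq (by simp) (hv0 v)).1⟩
  · have hvu := (hqp.tail_of_forall_eq (by simp) he0').1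
    exact ⟨(hvu.tail_of_forall_eq (by simp) (hv1 u)).2, (hqp.head_of_forall_eq (by simp) (hv0 v)).1⟩
  · have huv' := (hqp.head_of_forall_eq (by simp) he1).2
    exact ⟨(huv'.head_of_forall_eq (by simp) (hv0 u)).1, (hqp.tail_of_forall_eq (by simp) (hv1 v)).2⟩
  · have huv' := (hqp.tail_of_forall_eq (by simp) he1').1
    exact ⟨(hqp.head_of_forall_eq (by simp) (hv0 u)).1, (huv'.tail_of_forall_eq (by simp) (hv1 v)).2⟩

end Gadget

section FAS

variable {V : Type*} [LinearOrder V] {G : SimpleGraph V} {ℓ : ℕ} {u v : V}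
  {w : V} {F S : Set (GPVertex V ℓ × GPVertex V ℓ)}

theorem IsFAS.insert_vertexArc_sdiff (hF : IsFAS (GPArcs G ℓ) F) (huv : u < v)
    (hw : w = u ∨ w = v) (hS : S ⊆ ⋃ j, edgeArcsAt u v j) :
    IsFAS (GPArcs G ℓ) (insert (vertexArc ℓ w) (F \ S)) := by
  refine ⟨Set.insert_subset (vertexArc_mem_gpArcs w) (Set.sdiff_subset.trans hF.1),
    hF.2.of_cycle_arcs_mem fun p q hpq hqp => ⟨hpq.1, fun hpqF => ?_⟩⟩
  have hpqS : (p, q) ∈ S := by_contra fun h => hpq.2 (.inr ⟨hpqF, h⟩)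
  obtain ⟨j, hj⟩ := Set.mem_iUnion.mp (hS hpqS)
  obtain ⟨hu, hv⟩ := vertexArcs_mem_of_reflTransGen Set.sdiff_subset huv hj hqp
  obtain rfl | rfl := hw
  exacts [hu.2 (.inl rfl), hv.2 (.inl rfl)]

theorem IsFAS.meets_gadget (hF : IsFAS (GPArcs G ℓ) F) (hadj : G.Adj u v) (huv : u < v)
    (j : Fin ℓ) : vertexArc ℓ u ∈ F ∨ vertexArc ℓ v ∈ F ∨ ∃ b ∈ edgeArcsAt u v j, b ∈ F := by
  by_contra! h
  obtain ⟨hu, hv, he⟩ := h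
  have hA := edgeArcsAt_subset_gpArcs hadj huv j
  have harc (p q) (hpq : (p, q) ∈ edgeArcsAt u v j) :
      TransGen (fun a b => (a, b) ∈ GPArcs G ℓ \ F) p q :=
    .single ⟨hA hpq, he _ hpq⟩
  exact hF.2 (Sum.inl (u, 0)) <| .head ⟨vertexArc_mem_gpArcs u, hu⟩ <|
    (harc _ (Sum.inr (s(u, v), 0, j)) (by simp [edgeArcsAt])).trans <|
    (harc _ _ (by simp [edgeArcsAt])).trans <| .head ⟨vertexArc_mem_gpArcs v, hv⟩ <|
    (harc _ (Sum.inr (s(u, v), 1, j)) (by simp [edgeArcsAt])).trans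
    (harc _ _ (by simp [edgeArcsAt]))

end FAS

/-- for `ℓ ≥ 2`, every minimum feedback arc set of `G'(ℓ)`
contains no edge arc (it consists only of vertex arcs). -/
theorem minimum_fas_has_no_edge_arc {V : Type*} [Fintype V] [LinearOrder V]
    (G : SimpleGraph V) (ℓ : ℕ) (hℓ : 2 ≤ ℓ)
    (F : Set (GPVertex V ℓ × GPVertex V ℓ)) (hF : IsFAS (GPArcs G ℓ) F)
    (hmin : ∀ F' : Set (GPVertex V ℓ × GPVertex V ℓ),
      IsFAS (GPArcs G ℓ) F' → F.ncard ≤ F'.ncard) :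
    ∀ a ∈ F, a ∉ edgeArcs G ℓ := by
  intro a haF ha
  obtain ⟨u, v, hadj, huv, j, haj⟩ := mem_edgeArcs.mp ha
  have : Nontrivial (Fin ℓ) := Fin.nontrivial_iff_two_le.mpr hℓ
  obtain ⟨j', hj'⟩ := exists_ne j
  have drop_a (w : V) (hw : w = u ∨ w = v) (hwF : vertexArc ℓ w ∈ F) : False := by
    have hF' := hF.insert_vertexArc_sdiff huv hw
      (Set.singleton_subset_iff.mpr (Set.mem_iUnion_of_mem j haj))
    have hwa : vertexArc ℓ w ∈ F \ {a} :=
      ⟨hwF, fun h => vertexArc_notMem_edgeArcsAt w u v j (h ▸ haj)⟩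
    rw [Set.insert_eq_of_mem hwa] at hF'
    exact (hmin _ hF').not_gt (Set.ncard_sdiff_singleton_lt_of_mem haF)
  rcases hF.meets_gadget hadj huv j' with hu | hv | ⟨b, hbj', hbF⟩
  · exact drop_a u (.inl rfl) hu
  · exact drop_a v (.inr rfl) hv
  · have hab : a ≠ b := fun h => hj' (eq_of_mem_edgeArcsAt_of_mem_edgeArcsAt hbj' (h ▸ haj))
    have hF' := hF.insert_vertexArc_sdiff huv (.inl rfl)
      (Set.pair_subset (Set.mem_iUnion_of_mem j haj) (Set.mem_iUnion_of_mem j' hbj'))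
    have hle := hmin _ hF'
    have hins := Set.ncard_insert_le (vertexArc ℓ u) (F \ {a, b})
    have hsplit := Set.ncard_sdiff_add_ncard_of_subset (Set.pair_subset haF hbF)
    rw [Set.ncard_pair hab] at hsplit
    omega
end

section
/- Let G=(V,E) be a finite loopless undirected graph, ≺ a linear order on V, and ℓ ≥ 2. Then the minimum cardinality of a feedback arc set of the digraph G'(ℓ) equals the minimum cardinality of a vertex cover of G. -/
-- ===== auxiliary stuff =====

open Classical in
/-- Height function certifying acyclicity after removing the vertex arcs of a cover. -/
noncomputable def ht {V : Type*} [LinearOrder V] (C : Set V) (ℓ : ℕ) :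
    GPVertex V ℓ → ℕ
  | Sum.inl (v, i) =>
      if v ∈ C then (if i = 0 then 8 else 0) else (if i = 0 then 2 else 4)
  | Sum.inr (e, i, _) =>
      if (if i = 0 then Sym2.lift ⟨max, fun a b => max_comm a b⟩ e
          else Sym2.lift ⟨min, fun a b => min_comm a b⟩ e) ∈ C
      then 6 else 1

lemma acyclic_of_ht {W : Type*} (A : Set (W × W)) (f : W → ℕ)
    (h : ∀ p ∈ A, f p.1 < f p.2) : Acyclic A := by
  intro v hv
  have key : ∀ a b, Relation.TransGen (fun u w => (u, w) ∈ A) a b → f a < f b := by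
    intro a b hab
    induction hab with
    | single h' => exact h _ h'
    | tail _ h' ih => exact ih.trans (h _ h')
  exact lt_irrefl _ (key v v hv)

lemma ht_lt {V : Type*} [LinearOrder V] {G : SimpleGraph V} {C : Set V} {ℓ : ℕ}
    (hC : IsVC G C) {p : GPVertex V ℓ × GPVertex V ℓ}
    (hp : p ∈ GPArcs G ℓ) (hnp : ∀ v ∈ C, p ≠ (Sum.inl (v, 0), Sum.inl (v, 1))) :
    ht C ℓ p.1 < ht C ℓ p.2 := by
  rcases hp with ⟨v, rfl⟩ | ⟨u, v, hadj, huv, j, h | h | h | h⟩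
  · have hv : v ∉ C := fun hvC => hnp v hvC rfl
    simp [ht, hv]
  all_goals subst h
  · -- (u_1, e0j)
    by_cases hv : v ∈ C
    · by_cases hu : u ∈ C <;>
        simp [ht, Sym2.lift_mk, max_eq_right huv.le, hv, hu]
    · have hu : u ∈ C := (hC u v hadj).resolve_right hv
      simp [ht, Sym2.lift_mk, max_eq_right huv.le, hv, hu]
  · -- (e0j, v_0)
    by_cases hv : v ∈ C <;>
      simp [ht, Sym2.lift_mk, max_eq_right huv.le, hv]
  · -- (v_1, e1j)
    by_cases hu : u ∈ C
    · by_cases hv : v ∈ C <;>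
        simp [ht, Sym2.lift_mk, min_eq_left huv.le, hv, hu]
    · have hv : v ∈ C := (hC u v hadj).resolve_left hu
      simp [ht, Sym2.lift_mk, min_eq_left huv.le, hv, hu]
  · -- (e1j, u_0)
    by_cases hu : u ∈ C <;>
      simp [ht, Sym2.lift_mk, min_eq_left huv.le, hu]

/-- Tag of an arc: the smaller endpoint of the edge label it mentions, if any. -/
def tag {V : Type*} [LinearOrder V] {ℓ : ℕ} : GPVertex V ℓ × GPVertex V ℓ → Option V
  | (Sum.inr (e, _, _), _) => some (Sym2.lift ⟨min, fun a b => min_comm a b⟩ e)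
  | (Sum.inl _, Sum.inr (e, _, _)) => some (Sym2.lift ⟨min, fun a b => min_comm a b⟩ e)
  | (Sum.inl _, Sum.inl _) => none

lemma tag_vertex {V : Type*} [LinearOrder V] {ℓ : ℕ} (v : V) :
    tag (ℓ := ℓ) (Sum.inl (v, 0), Sum.inl (v, 1)) = none := rfl

lemma tag_witness {V : Type*} [LinearOrder V] {ℓ : ℕ} {u v : V} (huv : u < v)
    {a : GPVertex V ℓ × GPVertex V ℓ} {j : Fin ℓ}
    (h : a = (Sum.inl (u, 1), Sum.inr (s(u, v), 0, j)) ∨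
      a = (Sum.inr (s(u, v), 0, j), Sum.inl (v, 0)) ∨
      a = (Sum.inl (v, 1), Sum.inr (s(u, v), 1, j)) ∨
      a = (Sum.inr (s(u, v), 1, j), Sum.inl (u, 0))) :
    tag a = some u := by
  rcases h with h | h | h | h <;> subst h <;>
    simp [tag, Sym2.lift_mk, min_eq_left huv.le]

lemma vc_of_fas {V : Type*} [Fintype V] [LinearOrder V] (G : SimpleGraph V)
    (ℓ : ℕ) (hℓ : 1 ≤ ℓ) (F : Set (GPVertex V ℓ × GPVertex V ℓ))
    (hF : IsFAS (GPArcs G ℓ) F) :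
    ∃ C : Set V, IsVC G C ∧ C.ncard ≤ F.ncard := by
  classical
  set C0 : Set V := {v | (Sum.inl (v, 0), Sum.inl (v, 1)) ∈ F} with hC0
  set j0 : Fin ℓ := ⟨0, hℓ⟩ with hj0
  -- for each uncovered edge, F contains one of its edge arcs
  have key : ∀ u v : V, G.Adj u v → u < v → u ∉ C0 → v ∉ C0 →
      ∃ a ∈ F, a = (Sum.inl (u, 1), Sum.inr (s(u, v), 0, j0)) ∨
        a = (Sum.inr (s(u, v), 0, j0), Sum.inl (v, 0)) ∨
        a = (Sum.inl (v, 1), Sum.inr (s(u, v), 1, j0)) ∨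
        a = (Sum.inr (s(u, v), 1, j0), Sum.inl (u, 0)) := by
    intro u v hadj huv hu0 hv0
    by_contra hcon
    push_neg at hcon
    have hmem : ∀ a : GPVertex V ℓ × GPVertex V ℓ,
        (a = (Sum.inl (u, 1), Sum.inr (s(u, v), 0, j0)) ∨
          a = (Sum.inr (s(u, v), 0, j0), Sum.inl (v, 0)) ∨
          a = (Sum.inl (v, 1), Sum.inr (s(u, v), 1, j0)) ∨
          a = (Sum.inr (s(u, v), 1, j0), Sum.inl (u, 0))) →
        a ∈ GPArcs G ℓ \ F := by
      intro a ha
      refine ⟨Or.inr ⟨u, v, hadj, huv, j0, ha⟩, fun haF => ?_⟩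
      have := hcon a haF
      tauto
    set R := fun x y : GPVertex V ℓ => (x, y) ∈ GPArcs G ℓ \ F with hR
    have t1 : R (Sum.inl (u, 0)) (Sum.inl (u, 1)) := ⟨Or.inl ⟨u, rfl⟩, hu0⟩
    have t2 : R (Sum.inl (u, 1)) (Sum.inr (s(u, v), 0, j0)) := hmem _ (by tauto)
    have t3 : R (Sum.inr (s(u, v), 0, j0)) (Sum.inl (v, 0)) := hmem _ (by tauto)
    have t4 : R (Sum.inl (v, 0)) (Sum.inl (v, 1)) := ⟨Or.inl ⟨v, rfl⟩, hv0⟩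
    have t5 : R (Sum.inl (v, 1)) (Sum.inr (s(u, v), 1, j0)) := hmem _ (by tauto)
    have t6 : R (Sum.inr (s(u, v), 1, j0)) (Sum.inl (u, 0)) := hmem _ (by tauto)
    exact hF.2 (Sum.inl (u, 0))
      (((((Relation.TransGen.single t1).tail t2).tail t3).tail t4).tail t5 |>.tail t6)
  set C : Set V := C0 ∪ {u | ∃ v, G.Adj u v ∧ u < v ∧ u ∉ C0 ∧ v ∉ C0} with hC
  have hVC : IsVC G C := by
    intro u v hadj
    rcases lt_trichotomy u v with huv | huv | huv
    · by_cases hu0 : u ∈ C0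
      · exact Or.inl (Or.inl hu0)
      by_cases hv0 : v ∈ C0
      · exact Or.inr (Or.inl hv0)
      · exact Or.inl (Or.inr ⟨v, hadj, huv, hu0, hv0⟩)
    · exact absurd huv hadj.ne
    · by_cases hv0 : v ∈ C0
      · exact Or.inr (Or.inl hv0)
      by_cases hu0 : u ∈ C0
      · exact Or.inl (Or.inl hu0)
      · exact Or.inr (Or.inr ⟨u, hadj.symm, huv, hv0, hu0⟩)
  refine ⟨C, hVC, ?_⟩
  have hsel : ∀ u ∈ C, ∃ a ∈ F,
      (u ∈ C0 ∧ a = (Sum.inl (u, 0), Sum.inl (u, 1))) ∨ (u ∉ C0 ∧ tag a = some u) := by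
    intro u hu
    by_cases h0 : u ∈ C0
    · exact ⟨_, h0, Or.inl ⟨h0, rfl⟩⟩
    · rcases hu with h0' | ⟨v, hadj, huv, hu0, hv0⟩
      · exact absurd h0' h0
      obtain ⟨a, haF, hw⟩ := key u v hadj huv hu0 hv0
      exact ⟨a, haF, Or.inr ⟨h0, tag_witness huv hw⟩⟩
  choose! f hfF hfP using hsel
  refine Set.ncard_le_ncard_of_injOn f hfF ?_ F.toFinite
  intro x hx y hy hxy
  rcases hfP x hx with ⟨hx0, hxa⟩ | ⟨hx0, hxa⟩ <;>
    rcases hfP y hy with ⟨hy0, hya⟩ | ⟨hy0, hya⟩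
  · rw [hxy, hya] at hxa
    have h1 := congrArg Prod.fst hxa
    simp only [Sum.inl.injEq, Prod.mk.injEq] at h1
    exact h1.1.symm
  · rw [← hxy, hxa, tag_vertex] at hya
    simp at hya
  · rw [hxy, hya, tag_vertex] at hxa
    simp at hxa
  · rw [hxy, hya] at hxa
    simpa using hxa.symm

/-- for `ℓ ≥ 2`, the minimum cardinality of a feedback arc set of
`G'(ℓ)` equals the minimum cardinality of a vertex cover of `G`. -/
theorem min_fas_card_eq_min_vc_card {V : Type*} [Fintype V] [LinearOrder V]
    (G : SimpleGraph V) (ℓ : ℕ) (hℓ : 2 ≤ ℓ) :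
    sInf {n : ℕ | ∃ F : Set (GPVertex V ℓ × GPVertex V ℓ),
        IsFAS (GPArcs G ℓ) F ∧ F.ncard = n} =
      sInf {n : ℕ | ∃ C : Set V, IsVC G C ∧ C.ncard = n} := by
  classical
  have hS2 : {n : ℕ | ∃ C : Set V, IsVC G C ∧ C.ncard = n}.Nonempty :=
    ⟨(Set.univ : Set V).ncard, Set.univ, fun u v _ => Or.inl (Set.mem_univ u), rfl⟩
  have hAc : Acyclic (GPArcs G ℓ \ GPArcs G ℓ) := by
    intro v hv
    cases hv with
    | single h => exact h.2 h.1
    | tail _ h => exact h.2 h.1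
  have hS1 : {n : ℕ | ∃ F : Set (GPVertex V ℓ × GPVertex V ℓ),
      IsFAS (GPArcs G ℓ) F ∧ F.ncard = n}.Nonempty :=
    ⟨(GPArcs G ℓ).ncard, GPArcs G ℓ, ⟨subset_rfl, hAc⟩, rfl⟩
  apply le_antisymm
  · obtain ⟨C, hC, hCc⟩ := Nat.sInf_mem hS2
    apply Nat.sInf_le
    refine ⟨(fun v : V =>
      ((Sum.inl (v, 0) : GPVertex V ℓ), (Sum.inl (v, 1) : GPVertex V ℓ))) '' C,
      ⟨?_, ?_⟩, ?_⟩
    · rintro p ⟨v, hv, rfl⟩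
      exact Or.inl ⟨v, rfl⟩
    · apply acyclic_of_ht _ (ht C ℓ)
      intro p hp
      apply ht_lt hC hp.1
      intro v hvC hpv
      exact hp.2 ⟨v, hvC, hpv.symm⟩
    · rw [Set.ncard_image_of_injective _ (fun a b hab => ?_), hCc]
      simp only [Prod.mk.injEq, Sum.inl.injEq] at hab
      exact hab.1.1
  · obtain ⟨F, hF, hFc⟩ := Nat.sInf_mem hS1
    obtain ⟨C, hC, hle⟩ := vc_of_fas G ℓ (by omega) F hF
    exact le_trans (Nat.sInf_le ⟨C, hC, rfl⟩) (hFc ▸ hle)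
end

section
/- Let G=(V,E) be a finite loopless undirected graph, ≺ a linear order on V, and ℓ ≥ 2. The map C ↦ {(v_0,v_1) : v ∈ C} is a bijection from the set of minimum vertex covers of G onto the set of minimum feedback arc sets of the digraph G'(ℓ). In particular, the number of minimum vertex covers of G equals the number of minimum feedback arc sets of G'(ℓ). -/
section MyAux

variable {V : Type*} [Fintype V] [LinearOrder V] {G : SimpleGraph V} {ℓ : ℕ}

/-- image of a vertex set under the vertex-arc map -/
def imgC (G : SimpleGraph V) (ℓ : ℕ) (C : Set V) : Set (GPVertex V ℓ × GPVertex V ℓ) :=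
  {p : GPVertex V ℓ × GPVertex V ℓ | ∃ v ∈ C, p = (Sum.inl (v, 0), Sum.inl (v, 1))}

def arcOf (ℓ : ℕ) (v : V) : GPVertex V ℓ × GPVertex V ℓ :=
  (Sum.inl (v, 0), Sum.inl (v, 1))

lemma arcOf_inj : Function.Injective (arcOf (V := V) ℓ) := by
  intro a b h
  simpa [arcOf, Prod.ext_iff] using h

lemma imgC_eq_image (C : Set V) : imgC G ℓ C = arcOf ℓ '' C := by
  ext p; simp [imgC, arcOf, Set.mem_image, eq_comm]

lemma imgC_ncard (C : Set V) : (imgC G ℓ C).ncard = C.ncard := by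
  rw [imgC_eq_image, Set.ncard_image_of_injective _ arcOf_inj]

lemma acyclic_of_rank {W : Type*} (R : Set (W × W)) (f : W → ℕ)
    (h : ∀ p ∈ R, f p.1 < f p.2) : Acyclic R := by
  intro v hv
  have key : ∀ a b : W, Relation.TransGen (fun u w => (u, w) ∈ R) a b → f a < f b := by
    intro a b hab
    induction hab with
    | single h' => exact h _ h'
    | tail _ h' ih => exact ih.trans (h _ h')
  exact lt_irrefl _ (key v v hv)

noncomputable def symMax : Sym2 V → V := Sym2.lift ⟨fun a b => max a b, fun a b => max_comm a b⟩
noncomputable def symMin : Sym2 V → V := Sym2.lift ⟨fun a b => min a b, fun a b => min_comm a b⟩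

@[simp] lemma symMax_mk (u v : V) : symMax s(u, v) = max u v := rfl
@[simp] lemma symMin_mk (u v : V) : symMin s(u, v) = min u v := rfl

open Classical in
noncomputable def rk (C : Set V) : GPVertex V ℓ → ℕ := fun w =>
  match w with
  | Sum.inl (x, i) =>
      if i = 0 then (if x ∈ C then 10 else 4) else (if x ∈ C then 0 else 5)
  | Sum.inr (e, i, _) =>
      if i = 0 then (if symMax e ∈ C then 6 else 2) else (if symMin e ∈ C then 6 else 2)

lemma vc_fas {C : Set V} (hC : IsVC G C) : IsFAS (GPArcs G ℓ) (imgC G ℓ C) := by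
  constructor
  · rintro p ⟨v, hv, rfl⟩
    exact Or.inl ⟨v, rfl⟩
  · apply acyclic_of_rank _ (rk C)
    rintro p ⟨hA, hF⟩
    rcases hA with ⟨v, rfl⟩ | ⟨u, v, huv, hlt, j, h4⟩
    · -- vertex arc, v ∉ C
      have hvC : v ∉ C := fun h => hF ⟨v, h, rfl⟩
      simp only [rk, hvC]
      norm_num
    · have hmax : max u v = v := max_eq_right hlt.le
      have hmin : min u v = u := min_eq_left hlt.le
      have hor := hC u v huv
      rcases h4 with rfl | rfl | rfl | rfl <;>
        simp only [rk, symMax_mk, symMin_mk, hmax, hmin] <;>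
        by_cases hu : u ∈ C <;> by_cases hv : v ∈ C <;>
        simp_all <;> norm_num


def VFset (F : Set (GPVertex V ℓ × GPVertex V ℓ)) : Set V :=
  {v | (Sum.inl (v, 0), Sum.inl (v, 1)) ∈ F}

def gad (ℓ : ℕ) (e : Sym2 V) : Set (GPVertex V ℓ × GPVertex V ℓ) :=
  {p | (∃ i j, p.1 = Sum.inr (e, i, j)) ∨ ∃ i j, p.2 = Sum.inr (e, i, j)}

def kap : GPVertex V ℓ × GPVertex V ℓ → V ⊕ Sym2 V := fun p =>
  match p with
  | (Sum.inr (e, _, _), _) => Sum.inr e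
  | (_, Sum.inr (e, _, _)) => Sum.inr e
  | (Sum.inl (x, _), Sum.inl _) => Sum.inl x

@[simp] lemma kap_vertexArc (v : V) :
    kap (ℓ := ℓ) (Sum.inl (v, 0), Sum.inl (v, 1)) = Sum.inl v := rfl

lemma vertexArc_not_gad (v : V) (e : Sym2 V) :
    (Sum.inl (v, 0), Sum.inl (v, 1)) ∉ gad (V := V) ℓ e := by
  rintro (⟨i, j, h⟩ | ⟨i, j, h⟩) <;> simp at h

lemma mem_gad_iff_kap {p : GPVertex V ℓ × GPVertex V ℓ} (hp : p ∈ GPArcs G ℓ) (e : Sym2 V) :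
    p ∈ gad ℓ e ↔ kap p = Sum.inr e := by
  rcases hp with ⟨v, rfl⟩ | ⟨u, v, huv, hlt, j, h4⟩
  · simp only [kap]
    constructor
    · intro h; exact absurd h (vertexArc_not_gad v e)
    · intro h; simp at h
  · rcases h4 with rfl | rfl | rfl | rfl <;>
      (constructor
       · rintro (⟨i, j', h⟩ | ⟨i, j', h⟩) <;> simp_all [kap]
       · intro h; simp only [kap] at h
         simp only [Sum.inr.injEq] at h
         subst h
         first
           | exact Or.inr ⟨_, _, rfl⟩
           | exact Or.inl ⟨_, _, rfl⟩)

lemma gad_eq_of_mem {p : GPVertex V ℓ × GPVertex V ℓ} (hp : p ∈ GPArcs G ℓ) {e e' : Sym2 V}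
    (h1 : p ∈ gad ℓ e) (h2 : p ∈ gad ℓ e') : e = e' := by
  rw [mem_gad_iff_kap hp] at h1 h2
  rw [h1] at h2
  exact Sum.inr.inj h2


lemma hit_cycle {F : Set (GPVertex V ℓ × GPVertex V ℓ)} (hF : IsFAS (GPArcs G ℓ) F)
    {u v : V} (huv : G.Adj u v) (hlt : u < v)
    (hu : (Sum.inl (u, 0), Sum.inl (u, 1)) ∉ F) (hv : (Sum.inl (v, 0), Sum.inl (v, 1)) ∉ F)
    (j j' : Fin ℓ) :
    (Sum.inl (u, 1), Sum.inr (s(u, v), 0, j)) ∈ F ∨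
    (Sum.inr (s(u, v), 0, j), Sum.inl (v, 0)) ∈ F ∨
    (Sum.inl (v, 1), Sum.inr (s(u, v), 1, j')) ∈ F ∨
    (Sum.inr (s(u, v), 1, j'), Sum.inl (u, 0)) ∈ F := by
  by_contra hcon
  push_neg at hcon
  obtain ⟨h1, h2, h3, h4⟩ := hcon
  apply hF.2 (Sum.inl (u, 0))
  have s1 : ((Sum.inl (u, 0) : GPVertex V ℓ), (Sum.inl (u, 1) : GPVertex V ℓ)) ∈ GPArcs G ℓ \ F :=
    ⟨Or.inl ⟨u, rfl⟩, hu⟩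
  have s2 : ((Sum.inl (u, 1) : GPVertex V ℓ), (Sum.inr (s(u, v), 0, j) : GPVertex V ℓ)) ∈
      GPArcs G ℓ \ F := ⟨Or.inr ⟨u, v, huv, hlt, j, Or.inl rfl⟩, h1⟩
  have s3 : ((Sum.inr (s(u, v), 0, j) : GPVertex V ℓ), (Sum.inl (v, 0) : GPVertex V ℓ)) ∈
      GPArcs G ℓ \ F := ⟨Or.inr ⟨u, v, huv, hlt, j, Or.inr (Or.inl rfl)⟩, h2⟩
  have s4 : ((Sum.inl (v, 0) : GPVertex V ℓ), (Sum.inl (v, 1) : GPVertex V ℓ)) ∈ GPArcs G ℓ \ F :=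
    ⟨Or.inl ⟨v, rfl⟩, hv⟩
  have s5 : ((Sum.inl (v, 1) : GPVertex V ℓ), (Sum.inr (s(u, v), 1, j') : GPVertex V ℓ)) ∈
      GPArcs G ℓ \ F := ⟨Or.inr ⟨u, v, huv, hlt, j', Or.inr (Or.inr (Or.inl rfl))⟩, h3⟩
  have s6 : ((Sum.inr (s(u, v), 1, j') : GPVertex V ℓ), (Sum.inl (u, 0) : GPVertex V ℓ)) ∈
      GPArcs G ℓ \ F := ⟨Or.inr ⟨u, v, huv, hlt, j', Or.inr (Or.inr (Or.inr rfl))⟩, h4⟩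
  have t1 : Relation.TransGen (fun a b => (a, b) ∈ GPArcs G ℓ \ F)
      (Sum.inl (u, 0)) (Sum.inl (u, 1)) := Relation.TransGen.single s1
  have t2 := t1.tail s2
  have t3 := t2.tail s3
  have t4 := t3.tail s4
  have t5 := t4.tail s5
  exact t5.tail s6

lemma bad_edge_arcs {F : Set (GPVertex V ℓ × GPVertex V ℓ)} (hℓ : 2 ≤ ℓ)
    (hF : IsFAS (GPArcs G ℓ) F) {u v : V} (huv : G.Adj u v) (hlt : u < v)
    (hu : (Sum.inl (u, 0), Sum.inl (u, 1)) ∉ F) (hv : (Sum.inl (v, 0), Sum.inl (v, 1)) ∉ F) :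
    ∃ a b, a ∈ F ∩ gad ℓ s(u, v) ∧ b ∈ F ∩ gad ℓ s(u, v) ∧ a ≠ b := by
  have h0 : (0 : ℕ) < ℓ := by omega
  have h1 : (1 : ℕ) < ℓ := by omega
  set j0 : Fin ℓ := ⟨0, h0⟩ with hj0
  set j1 : Fin ℓ := ⟨1, h1⟩ with hj1
  have hjne : j0 ≠ j1 := by
    intro h
    have := congrArg Fin.val h
    simp [hj0, hj1] at this
  by_cases hside : ∀ j : Fin ℓ,
      (Sum.inl (u, 1), Sum.inr (s(u, v), 0, j)) ∈ F ∨
      (Sum.inr (s(u, v), 0, j), Sum.inl (v, 0)) ∈ F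
  · rcases hside j0 with ha | ha <;> rcases hside j1 with hb | hb
    · exact ⟨_, _, ⟨ha, Or.inr ⟨0, j0, rfl⟩⟩, ⟨hb, Or.inr ⟨0, j1, rfl⟩⟩,
        by simp [Prod.ext_iff, Fin.ext_iff, hj0, hj1]⟩
    · exact ⟨_, _, ⟨ha, Or.inr ⟨0, j0, rfl⟩⟩, ⟨hb, Or.inl ⟨0, j1, rfl⟩⟩,
        by simp [Prod.ext_iff]⟩
    · exact ⟨_, _, ⟨ha, Or.inl ⟨0, j0, rfl⟩⟩, ⟨hb, Or.inr ⟨0, j1, rfl⟩⟩,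
        by simp [Prod.ext_iff]⟩
    · exact ⟨_, _, ⟨ha, Or.inl ⟨0, j0, rfl⟩⟩, ⟨hb, Or.inl ⟨0, j1, rfl⟩⟩,
        by simp [Prod.ext_iff, Fin.ext_iff, hj0, hj1]⟩
  · push_neg at hside
    obtain ⟨js, hs1, hs2⟩ := hside
    have hall : ∀ j' : Fin ℓ,
        (Sum.inl (v, 1), Sum.inr (s(u, v), 1, j')) ∈ F ∨
        (Sum.inr (s(u, v), 1, j'), Sum.inl (u, 0)) ∈ F := by
      intro j'
      rcases hit_cycle hF huv hlt hu hv js j' with h | h | h | h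
      · exact absurd h hs1
      · exact absurd h hs2
      · exact Or.inl h
      · exact Or.inr h
    rcases hall j0 with ha | ha <;> rcases hall j1 with hb | hb
    · exact ⟨_, _, ⟨ha, Or.inr ⟨1, j0, rfl⟩⟩, ⟨hb, Or.inr ⟨1, j1, rfl⟩⟩,
        by simp [Prod.ext_iff, Fin.ext_iff, hj0, hj1]⟩
    · exact ⟨_, _, ⟨ha, Or.inr ⟨1, j0, rfl⟩⟩, ⟨hb, Or.inl ⟨1, j1, rfl⟩⟩,
        by simp [Prod.ext_iff]⟩
    · exact ⟨_, _, ⟨ha, Or.inl ⟨1, j0, rfl⟩⟩, ⟨hb, Or.inr ⟨1, j1, rfl⟩⟩,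
        by simp [Prod.ext_iff]⟩
    · exact ⟨_, _, ⟨ha, Or.inl ⟨1, j0, rfl⟩⟩, ⟨hb, Or.inl ⟨1, j1, rfl⟩⟩,
        by simp [Prod.ext_iff, Fin.ext_iff, hj0, hj1]⟩


lemma fas_dichotomy (hℓ : 2 ≤ ℓ) {F : Set (GPVertex V ℓ × GPVertex V ℓ)}
    (hF : IsFAS (GPArcs G ℓ) F) :
    (∃ C, IsVC G C ∧ F = imgC G ℓ C) ∨ (∃ C, IsVC G C ∧ C.ncard < F.ncard) := by
  classical
  set VF : Set V := VFset F with hVF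
  set BadE : Set (Sym2 V) :=
    {e | ∃ u v : V, G.Adj u v ∧ u < v ∧ e = s(u, v) ∧ u ∉ VF ∧ v ∉ VF} with hBadE
  rcases Set.eq_empty_or_nonempty BadE with hB | hB
  · -- no bad edges
    have hVC : IsVC G VF := by
      intro a b hab
      by_contra hn
      push_neg at hn
      obtain ⟨ha, hb⟩ := hn
      rcases lt_or_gt_of_ne hab.ne with hlt | hlt
      · exact (Set.eq_empty_iff_forall_notMem.mp hB s(a, b)) ⟨a, b, hab, hlt, rfl, ha, hb⟩
      · exact (Set.eq_empty_iff_forall_notMem.mp hB s(b, a)) ⟨b, a, hab.symm, hlt, rfl, hb, ha⟩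
    have hsub : imgC G ℓ VF ⊆ F := by
      rintro p ⟨w, hw, rfl⟩
      exact hw
    by_cases hFeq : F = imgC G ℓ VF
    · exact Or.inl ⟨VF, hVC, hFeq⟩
    · refine Or.inr ⟨VF, hVC, ?_⟩
      have hss : imgC G ℓ VF ⊂ F := hsub.ssubset_of_ne (fun h => hFeq h.symm)
      calc VF.ncard = (imgC G ℓ VF).ncard := (imgC_ncard VF).symm
        _ < F.ncard := Set.ncard_lt_ncard hss (Set.toFinite F)
  · -- some bad edge
    obtain ⟨e0, he0mem⟩ := hB
    obtain ⟨u0, v0, hadj0, hlt0, he0eq, hu0, hv0⟩ := id he0mem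
    set C' : Set V := VF ∪ symMin '' BadE with hC'
    have hVC' : IsVC G C' := by
      intro a b hab
      by_cases ha : a ∈ VF
      · exact Or.inl (Or.inl ha)
      by_cases hb : b ∈ VF
      · exact Or.inr (Or.inl hb)
      rcases lt_or_gt_of_ne hab.ne with hlt | hlt
      · refine Or.inl (Or.inr ⟨s(a, b), ⟨a, b, hab, hlt, rfl, ha, hb⟩, ?_⟩)
        simp [min_eq_left hlt.le]
      · refine Or.inr (Or.inr ⟨s(b, a), ⟨b, a, hab.symm, hlt, rfl, hb, ha⟩, ?_⟩)
        simp [min_eq_left hlt.le]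
    obtain ⟨a, b, ⟨haF, hag⟩, ⟨hbF, hbg⟩, hab⟩ := bad_edge_arcs hℓ hF hadj0 hlt0 hu0 hv0
    have hF1 : 2 ≤ (F ∩ gad ℓ e0).ncard := by
      have hpair : ({a, b} : Set (GPVertex V ℓ × GPVertex V ℓ)) ⊆ F ∩ gad ℓ e0 := by
        rw [he0eq]
        rintro x (rfl | rfl)
        · exact ⟨haF, hag⟩
        · exact ⟨hbF, hbg⟩
      calc 2 = ({a, b} : Set (GPVertex V ℓ × GPVertex V ℓ)).ncard := (Set.ncard_pair hab).symm
        _ ≤ _ := Set.ncard_le_ncard hpair (Set.toFinite _)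
    set S : Set (V ⊕ Sym2 V) := Sum.inl '' VF ∪ Sum.inr '' (BadE \ {e0}) with hS
    have hSsub : S ⊆ kap '' (F \ gad ℓ e0) := by
      rintro x (⟨w, hw, rfl⟩ | ⟨e, ⟨heB, hene⟩, rfl⟩)
      · exact ⟨(Sum.inl (w, 0), Sum.inl (w, 1)), ⟨hw, vertexArc_not_gad w e0⟩, rfl⟩
      · obtain ⟨u, v, hadj, hlt, rfl, hu, hv⟩ := heB
        obtain ⟨c, _, ⟨hcF, hcg⟩, _, _⟩ := bad_edge_arcs hℓ hF hadj hlt hu hv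
        refine ⟨c, ⟨hcF, ?_⟩, ?_⟩
        · intro hcg0
          exact hene (gad_eq_of_mem (hF.1 hcF) hcg hcg0)
        · exact (mem_gad_iff_kap (hF.1 hcF) _).mp hcg
    have hScard : S.ncard = VF.ncard + (BadE \ {e0}).ncard := by
      rw [hS, Set.ncard_union_eq ?_ (Set.toFinite _) (Set.toFinite _),
        Set.ncard_image_of_injective _ Sum.inl_injective,
        Set.ncard_image_of_injective _ Sum.inr_injective]
      rw [Set.disjoint_left]
      rintro x ⟨w, _, rfl⟩ ⟨e, _, h⟩
      simp at h
    have hdiff : (BadE \ {e0}).ncard + 1 = BadE.ncard :=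
      Set.ncard_diff_singleton_add_one he0mem (Set.toFinite _)
    have hsplit : (F ∩ gad ℓ e0).ncard + (F \ gad ℓ e0).ncard = F.ncard :=
      Set.ncard_inter_add_ncard_diff_eq_ncard F (gad ℓ e0) (Set.toFinite F)
    have h2 : S.ncard ≤ (F \ gad ℓ e0).ncard :=
      (Set.ncard_le_ncard hSsub (Set.toFinite _)).trans (Set.ncard_image_le (Set.toFinite _))
    have hC'le : C'.ncard ≤ VF.ncard + BadE.ncard := by
      rw [hC']
      refine (Set.ncard_union_le _ _).trans ?_
      exact Nat.add_le_add_left (Set.ncard_image_le (Set.toFinite _)) _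
    exact Or.inr ⟨C', hVC', by omega⟩

end MyAux

/-- for `ℓ ≥ 2`, the map `C ↦ {(v_0,v_1) : v ∈ C}` is a bijection
from the set of minimum vertex covers of `G` onto the set of minimum feedback
arc sets of `G'(ℓ)`; in particular the two sets have the same cardinality. -/
theorem min_vc_bij_min_fas {V : Type*} [Fintype V] [LinearOrder V]
    (G : SimpleGraph V) (ℓ : ℕ) (hℓ : 2 ≤ ℓ) :
    Set.BijOn
        (fun C : Set V =>
          {p : GPVertex V ℓ × GPVertex V ℓ | ∃ v ∈ C, p = (Sum.inl (v, 0), Sum.inl (v, 1))})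
        {C : Set V | IsVC G C ∧ ∀ C' : Set V, IsVC G C' → C.ncard ≤ C'.ncard}
        {F : Set (GPVertex V ℓ × GPVertex V ℓ) | IsFAS (GPArcs G ℓ) F ∧
          ∀ F' : Set (GPVertex V ℓ × GPVertex V ℓ),
            IsFAS (GPArcs G ℓ) F' → F.ncard ≤ F'.ncard} ∧
      {C : Set V | IsVC G C ∧ ∀ C' : Set V, IsVC G C' → C.ncard ≤ C'.ncard}.ncard =
        {F : Set (GPVertex V ℓ × GPVertex V ℓ) | IsFAS (GPArcs G ℓ) F ∧
          ∀ F' : Set (GPVertex V ℓ × GPVertex V ℓ),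
            IsFAS (GPArcs G ℓ) F' → F.ncard ≤ F'.ncard}.ncard := by
  classical
  have hPne : {n | ∃ C : Set V, IsVC G C ∧ C.ncard = n}.Nonempty :=
    ⟨(Set.univ : Set V).ncard, Set.univ, fun u v _ => Or.inl (Set.mem_univ u), rfl⟩
  obtain ⟨C0, hC0, hC0card⟩ := Nat.sInf_mem hPne
  have hC0min : ∀ C', IsVC G C' → C0.ncard ≤ C'.ncard := by
    intro C' hC'
    rw [hC0card]
    exact Nat.sInf_le ⟨C', hC', rfl⟩
  have key : ∀ C : Set V, (∀ C', IsVC G C' → C.ncard ≤ C'.ncard) →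
      ∀ F', IsFAS (GPArcs G ℓ) F' → C.ncard ≤ F'.ncard := by
    intro C hmin F' hF'
    rcases fas_dichotomy hℓ hF' with ⟨C'', hVC'', rfl⟩ | ⟨C'', hVC'', hlt⟩
    · rw [imgC_ncard]
      exact hmin _ hVC''
    · exact (hmin _ hVC'').trans hlt.le
  have hbij : Set.BijOn (fun C : Set V => imgC G ℓ C)
      {C : Set V | IsVC G C ∧ ∀ C' : Set V, IsVC G C' → C.ncard ≤ C'.ncard}
      {F : Set (GPVertex V ℓ × GPVertex V ℓ) | IsFAS (GPArcs G ℓ) F ∧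
        ∀ F' : Set (GPVertex V ℓ × GPVertex V ℓ),
          IsFAS (GPArcs G ℓ) F' → F.ncard ≤ F'.ncard} := by
    refine ⟨?_, ?_, ?_⟩
    · rintro C ⟨hVC, hmin⟩
      exact ⟨vc_fas hVC, fun F' hF' => (imgC_ncard C) ▸ key C hmin F' hF'⟩
    · rintro C1 ⟨h1, _⟩ C2 ⟨h2, _⟩ heq
      simp only at heq
      ext v
      constructor
      · intro hv
        have hm : (Sum.inl (v, 0), Sum.inl (v, 1)) ∈ imgC G ℓ C1 := ⟨v, hv, rfl⟩
        rw [heq] at hm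
        obtain ⟨w, hw, hwe⟩ := hm
        obtain rfl : v = w := by simpa [Prod.ext_iff] using hwe
        exact hw
      · intro hv
        have hm : (Sum.inl (v, 0), Sum.inl (v, 1)) ∈ imgC G ℓ C2 := ⟨v, hv, rfl⟩
        rw [← heq] at hm
        obtain ⟨w, hw, hwe⟩ := hm
        obtain rfl : v = w := by simpa [Prod.ext_iff] using hwe
        exact hw
    · rintro F ⟨hFAS, hFmin⟩
      rcases fas_dichotomy hℓ hFAS with ⟨C, hVC, rfl⟩ | ⟨C, hVC, hlt⟩
      · refine ⟨C, ⟨hVC, ?_⟩, rfl⟩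
        intro C' hC'
        have h1 : (imgC G ℓ C).ncard ≤ (imgC G ℓ C').ncard := hFmin _ (vc_fas hC')
        rwa [imgC_ncard, imgC_ncard] at h1
      · exfalso
        have h1 : F.ncard ≤ (imgC G ℓ C0).ncard := hFmin _ (vc_fas hC0)
        rw [imgC_ncard] at h1
        have h2 := hC0min _ hVC
        omega
  exact ⟨hbij, by rw [← hbij.image_eq, Set.ncard_image_of_injOn hbij.injOn]⟩
end

section
/- Let G=(V,E) be a finite loopless undirected graph, ≺ a linear order on V, ℓ ≥ 1, and let k be an integer with 0 ≤ k < ℓ. Then the number of feedback arc sets of G'(ℓ) of cardinality exactly k equals Σ_{κ=0}^{k} (number of vertex covers of G of cardinality exactly κ) · binom(4ℓ|E|, k−κ), where 4ℓ|E| is the total number of edge arcs of G'(ℓ). -/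
section Gadget
variable {V : Type*} [LinearOrder V] {G : SimpleGraph V} {ℓ : ℕ}

/-- The vertex arcs corresponding to a set `C` of vertices. -/
def vArcsOf (C : Set V) (ℓ : ℕ) : Set (GPVertex V ℓ × GPVertex V ℓ) :=
  (fun v => (Sum.inl (v, 0), Sum.inl (v, 1))) '' C

lemma vArcsOf_subset_vertexArcs (C : Set V) : vArcsOf C ℓ ⊆ vertexArcs V ℓ := by
  rintro p ⟨v, _, rfl⟩; exact ⟨v, rfl⟩

lemma vArcsOf_ncard (C : Set V) : (vArcsOf C ℓ).ncard = C.ncard := by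
  apply Set.ncard_image_of_injective
  intro a b h
  simpa using h

lemma mem_vArcsOf_iff {C : Set V} {v : V} :
    (Sum.inl (v, 0), Sum.inl (v, 1)) ∈ vArcsOf C ℓ ↔ v ∈ C := by
  constructor
  · rintro ⟨w, hw, h⟩
    obtain rfl : w = v := by simpa using h
    exact hw
  · exact fun hv => ⟨v, hv, rfl⟩

lemma vertexArcs_disjoint_edgeArcs : Disjoint (vertexArcs V ℓ) (edgeArcs G ℓ) := by
  rw [Set.disjoint_left]
  rintro p ⟨v, rfl⟩ ⟨u, w, hadj, huw, j, h⟩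
  rcases h with h | h | h | h <;> simp [Prod.ext_iff] at h

end Gadget

section Rank

set_option linter.unusedSectionVars false

variable {V : Type*} [LinearOrder V] {G : SimpleGraph V} {ℓ : ℕ}

open Classical in
/-- A rank function certifying acyclicity once the vertex arcs of a cover are removed. -/
noncomputable def gpRank (C : Set V) : GPVertex V ℓ → ℕ
  | Sum.inl (v, i) =>
      if i = 0 then (if v ∈ C then 10 else 3) else (if v ∈ C then 0 else 6)
  | Sum.inr (e, i, _) =>
      if (if i = 0 then e.inf else e.sup) ∈ C then
        (if (if i = 0 then e.sup else e.inf) ∈ C then 5 else 1)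
      else 7

lemma gpRank_lt {C : Set V} (hC : IsVC G C) {S : Set (GPVertex V ℓ × GPVertex V ℓ)}
    {a b : GPVertex V ℓ} (hab : (a, b) ∈ GPArcs G ℓ \ (vArcsOf C ℓ ∪ S)) :
    gpRank C a < gpRank C b := by
  classical
  obtain ⟨hin, hout⟩ := hab
  rcases hin with ⟨v, hv⟩ | ⟨u, v, hadj, hlt, j, h⟩
  · obtain ⟨rfl, rfl⟩ : a = Sum.inl (v, 0) ∧ b = Sum.inl (v, 1) := by
      simpa [Prod.ext_iff] using hv
    have hvC : v ∉ C := fun hvC => hout (Or.inl (mem_vArcsOf_iff.2 hvC))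
    simp [gpRank, hvC]
  · have hinf : (s(u, v)).inf = u := by
      rw [Sym2.inf_mk]; exact inf_eq_left.2 hlt.le
    have hsup : (s(u, v)).sup = v := by
      rw [Sym2.sup_mk]; exact sup_eq_right.2 hlt.le
    have hcov := hC u v hadj
    rcases h with h | h | h | h <;>
      obtain ⟨rfl, rfl⟩ : _ ∧ _ := by simpa [Prod.ext_iff] using h
    all_goals simp only [gpRank, hinf, hsup]
    all_goals split_ifs <;> first | omega | tauto

end Rank

section FAS

set_option linter.unusedSectionVars false

variable {V : Type*} [LinearOrder V] {G : SimpleGraph V} {ℓ : ℕ}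

lemma acyclic_of_vc {C : Set V} (hC : IsVC G C) {S : Set (GPVertex V ℓ × GPVertex V ℓ)} :
    Acyclic (GPArcs G ℓ \ (vArcsOf C ℓ ∪ S)) := by
  intro x hx
  have key : ∀ a b : GPVertex V ℓ,
      Relation.TransGen (fun u w => (u, w) ∈ GPArcs G ℓ \ (vArcsOf C ℓ ∪ S)) a b →
      gpRank C a < gpRank C b := by
    intro a b h
    induction h with
    | single h => exact gpRank_lt hC h
    | tail _ h2 ih => exact ih.trans (gpRank_lt hC h2)
  exact lt_irrefl _ (key x x hx)

lemma isFAS_of_vc {C : Set V} (hC : IsVC G C) {S : Set (GPVertex V ℓ × GPVertex V ℓ)}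
    (hS : S ⊆ edgeArcs G ℓ) : IsFAS (GPArcs G ℓ) (vArcsOf C ℓ ∪ S) := by
  constructor
  · exact Set.union_subset ((vArcsOf_subset_vertexArcs C).trans Set.subset_union_left)
      (hS.trans Set.subset_union_right)
  · exact acyclic_of_vc hC

end FAS

section Decomp

set_option linter.unusedSectionVars false

variable {V : Type*} [Fintype V] [LinearOrder V] {G : SimpleGraph V} {ℓ : ℕ}

lemma exists_free_index {α : Type*} [Finite α] {ℓ : ℕ} {F : Set α} (hcard : F.ncard < ℓ)
    (a b : Fin ℓ → α) (ha : Function.Injective a) (hb : Function.Injective b)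
    (hab : ∀ j j', a j ≠ b j') : ∃ j, a j ∉ F ∧ b j ∉ F := by
  classical
  by_contra h
  push_neg at h
  set g : Fin ℓ → α := fun j => if a j ∈ F then a j else b j with hg
  have hgF : ∀ j, g j ∈ F := by
    intro j
    by_cases hj : a j ∈ F
    · simp [hg, hj]
    · simp [hg, hj, h j hj]
  have hginj : Function.Injective g := by
    intro j j' hjj'
    by_cases h1 : a j ∈ F <;> by_cases h2 : a j' ∈ F <;> simp [hg, h1, h2] at hjj'
    · exact ha hjj'
    · exact absurd hjj' (hab j j')
    · exact absurd hjj'.symm (hab j' j)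
    · exact hb hjj'
  have h1 : (Set.range g).ncard = ℓ := by
    rw [← Set.image_univ, Set.ncard_image_of_injective _ hginj, Set.ncard_univ,
      Nat.card_eq_fintype_card, Fintype.card_fin]
  have h2 : Set.range g ⊆ F := Set.range_subset_iff.2 hgF
  have := Set.ncard_le_ncard h2 (Set.toFinite F)
  omega

lemma vc_of_fas_s8 {F : Set (GPVertex V ℓ × GPVertex V ℓ)} (hF : IsFAS (GPArcs G ℓ) F)
    (hcard : F.ncard < ℓ) :
    IsVC G {v | (Sum.inl (v, 0), Sum.inl (v, 1)) ∈ F} := by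
  have claim : ∀ u v : V, G.Adj u v → u < v →
      (Sum.inl (u, 0), Sum.inl (u, 1)) ∉ F → (Sum.inl (v, 0), Sum.inl (v, 1)) ∉ F → False := by
    intro u v hadj hlt hu hv
    obtain ⟨j₁, hj₁a, hj₁b⟩ := exists_free_index hcard
      (fun j => ((Sum.inl (u, 1) : GPVertex V ℓ), Sum.inr (s(u, v), 0, j)))
      (fun j => ((Sum.inr (s(u, v), 0, j) : GPVertex V ℓ), Sum.inl (v, 0)))
      (fun j j' hj => by simpa [Prod.ext_iff] using hj)
      (fun j j' hj => by simpa [Prod.ext_iff] using hj)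
      (fun j j' => by simp [Prod.ext_iff])
    obtain ⟨j₂, hj₂a, hj₂b⟩ := exists_free_index hcard
      (fun j => ((Sum.inl (v, 1) : GPVertex V ℓ), Sum.inr (s(u, v), 1, j)))
      (fun j => ((Sum.inr (s(u, v), 1, j) : GPVertex V ℓ), Sum.inl (u, 0)))
      (fun j j' hj => by simpa [Prod.ext_iff] using hj)
      (fun j j' hj => by simpa [Prod.ext_iff] using hj)
      (fun j j' => by simp [Prod.ext_iff])
    apply hF.2 (Sum.inl (u, 0))
    refine Relation.TransGen.head ⟨Or.inl ⟨u, rfl⟩, hu⟩ ?_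
    refine Relation.TransGen.head ⟨Or.inr ⟨u, v, hadj, hlt, j₁, Or.inl rfl⟩, hj₁a⟩ ?_
    refine Relation.TransGen.head ⟨Or.inr ⟨u, v, hadj, hlt, j₁, Or.inr (Or.inl rfl)⟩, hj₁b⟩ ?_
    refine Relation.TransGen.head ⟨Or.inl ⟨v, rfl⟩, hv⟩ ?_
    refine Relation.TransGen.head ⟨Or.inr ⟨u, v, hadj, hlt, j₂, Or.inr (Or.inr (Or.inl rfl))⟩, hj₂a⟩ ?_
    exact Relation.TransGen.single ⟨Or.inr ⟨u, v, hadj, hlt, j₂, Or.inr (Or.inr (Or.inr rfl))⟩, hj₂b⟩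
  intro u v hadj
  by_contra hcon
  push_neg at hcon
  obtain ⟨hu, hv⟩ := hcon
  rcases lt_or_gt_of_ne hadj.ne with h | h
  · exact claim u v hadj h hu hv
  · exact claim v u hadj.symm h hv hu

lemma fas_decomp {F : Set (GPVertex V ℓ × GPVertex V ℓ)} (hF : IsFAS (GPArcs G ℓ) F)
    (hcard : F.ncard < ℓ) :
    ∃ C S, IsVC G C ∧ S ⊆ edgeArcs G ℓ ∧ F = vArcsOf C ℓ ∪ S := by
  refine ⟨{v | (Sum.inl (v, 0), Sum.inl (v, 1)) ∈ F}, F \ vertexArcs V ℓ,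
    vc_of_fas_s8 hF hcard, ?_, ?_⟩
  · rintro p ⟨hpF, hpV⟩
    rcases hF.1 hpF with h | h
    · exact absurd h hpV
    · exact h
  · ext p
    constructor
    · intro hp
      by_cases hvp : p ∈ vertexArcs V ℓ
      · obtain ⟨v, rfl⟩ := hvp
        exact Or.inl (mem_vArcsOf_iff.2 hp)
      · exact Or.inr ⟨hp, hvp⟩
    · rintro (⟨v, hv, rfl⟩ | ⟨hp, _⟩)
      · exact hv
      · exact hp

end Decomp

section EdgeCount

set_option linter.unusedSectionVars false

variable {V : Type*} [Fintype V] [LinearOrder V] {G : SimpleGraph V} {ℓ : ℕ}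

lemma sym2_eq_of_lt {u v u' v' : V} (h : s(u, v) = s(u', v')) (h1 : u < v) (h2 : u' < v') :
    u = u' ∧ v = v' := by
  rw [Sym2.eq_iff] at h
  rcases h with ⟨rfl, rfl⟩ | ⟨rfl, rfl⟩
  · exact ⟨rfl, rfl⟩
  · exact absurd (h1.trans h2) (lt_irrefl _)

lemma edgeSet_eq_image (G : SimpleGraph V) :
    G.edgeSet = (fun p : V × V => s(p.1, p.2)) '' {p : V × V | G.Adj p.1 p.2 ∧ p.1 < p.2} := by
  ext e
  refine Sym2.ind (fun a b => ?_) e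
  simp only [SimpleGraph.mem_edgeSet, Set.mem_image, Prod.exists, Set.mem_setOf_eq]
  constructor
  · intro hab
    rcases lt_or_gt_of_ne hab.ne with h | h
    · exact ⟨a, b, ⟨hab, h⟩, rfl⟩
    · exact ⟨b, a, ⟨hab.symm, h⟩, Sym2.eq_swap⟩
  · rintro ⟨u, v, ⟨h, -⟩, hee⟩
    rw [Sym2.eq_iff] at hee
    rcases hee with ⟨rfl, rfl⟩ | ⟨rfl, rfl⟩
    · exact h
    · exact h.symm

lemma ncard_orderedEdges (G : SimpleGraph V) :
    {p : V × V | G.Adj p.1 p.2 ∧ p.1 < p.2}.ncard = G.edgeSet.ncard := by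
  rw [edgeSet_eq_image G, Set.ncard_image_of_injOn]
  rintro ⟨u, v⟩ ⟨-, h1⟩ ⟨u', v'⟩ ⟨-, h2⟩ h
  obtain ⟨rfl, rfl⟩ := sym2_eq_of_lt h h1 h2
  rfl

end EdgeCount


open Set

lemma ncard_prod_aux {α β : Type*} (s : Set α) (t : Set β) (hs : s.Finite) (ht : t.Finite) :
    (s ×ˢ t).ncard = s.ncard * t.ncard := by
  rw [ncard_eq_toFinset_card _ (hs.prod ht), ← Set.Finite.toFinset_prod hs ht,
    Finset.card_product, ncard_eq_toFinset_card _ hs, ncard_eq_toFinset_card _ ht]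

lemma ncard_subsets_aux {β : Type*} (T : Set β) (hT : T.Finite) (m : ℕ) :
    {S : Set β | S ⊆ T ∧ S.ncard = m}.ncard = T.ncard.choose m := by
  classical
  have himg : {S : Set β | S ⊆ T ∧ S.ncard = m}
      = (fun (f : Finset β) => (↑f : Set β)) '' ↑(hT.toFinset.powersetCard m) := by
    ext S
    simp only [Set.mem_image, Finset.mem_coe, Finset.mem_powersetCard, mem_setOf_eq]
    constructor
    · rintro ⟨hsub, hcard⟩
      have hS : S.Finite := hT.subset hsub
      exact ⟨hS.toFinset, ⟨Set.Finite.toFinset_subset_toFinset.2 hsub,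
        by rw [← ncard_eq_toFinset_card _ hS, hcard]⟩, hS.coe_toFinset⟩
    · rintro ⟨f, ⟨hf1, hf2⟩, rfl⟩
      exact ⟨fun x hx => hT.mem_toFinset.1 (hf1 hx), by simp [Set.ncard_coe_finset, hf2]⟩
  rw [himg, Set.ncard_image_of_injOn (fun a _ b _ h => Finset.coe_injective h),
    Set.ncard_coe_finset, Finset.card_powersetCard, ncard_eq_toFinset_card _ hT]

lemma ncard_biUnion_aux {α ι : Type*} [Finite α] [DecidableEq ι] (t : Finset ι) (f : ι → Set α)
    (hd : ∀ i ∈ t, ∀ j ∈ t, i ≠ j → Disjoint (f i) (f j)) :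
    (⋃ i ∈ t, f i).ncard = ∑ i ∈ t, (f i).ncard := by
  induction t using Finset.induction_on with
  | empty => simp
  | @insert a s ha ih =>
    rw [Finset.set_biUnion_insert, Finset.sum_insert ha,
      Set.ncard_union_eq ?_ (Set.toFinite _) (Set.toFinite _),
      ih (fun i hi j hj hij => hd i (Finset.mem_insert_of_mem hi) j (Finset.mem_insert_of_mem hj) hij)]
    simp only [Set.disjoint_iUnion_right]
    intro i hi
    exact hd a (Finset.mem_insert_self a s) i (Finset.mem_insert_of_mem hi)
      (fun h => ha (h ▸ hi))

section EdgeCount2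

set_option linter.unusedSectionVars false

variable {V : Type*} [Fintype V] [LinearOrder V] {G : SimpleGraph V} {ℓ : ℕ}

/-- Index map enumerating the edge arcs. -/
def edgeArcMap (V : Type*) (ℓ : ℕ) :
    (V × V) × (Fin 2 × Fin 2 × Fin ℓ) → GPVertex V ℓ × GPVertex V ℓ :=
  fun x =>
    if x.2.1 = 0 then
      (if x.2.2.1 = 0 then (Sum.inl (x.1.1, 1), Sum.inr (s(x.1.1, x.1.2), 0, x.2.2.2))
       else (Sum.inr (s(x.1.1, x.1.2), 0, x.2.2.2), Sum.inl (x.1.2, 0)))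
    else
      (if x.2.2.1 = 0 then (Sum.inl (x.1.2, 1), Sum.inr (s(x.1.1, x.1.2), 1, x.2.2.2))
       else (Sum.inr (s(x.1.1, x.1.2), 1, x.2.2.2), Sum.inl (x.1.1, 0)))

lemma edgeArcs_eq_image (G : SimpleGraph V) (ℓ : ℕ) :
    edgeArcs G ℓ = edgeArcMap V ℓ ''
      ({p : V × V | G.Adj p.1 p.2 ∧ p.1 < p.2} ×ˢ (Set.univ : Set (Fin 2 × Fin 2 × Fin ℓ))) := by
  ext p
  constructor
  · rintro ⟨u, v, hadj, hlt, j, h | h | h | h⟩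
    · exact ⟨⟨(u, v), (0, 0, j)⟩, ⟨⟨hadj, hlt⟩, trivial⟩, by simp [edgeArcMap, h]⟩
    · exact ⟨⟨(u, v), (0, 1, j)⟩, ⟨⟨hadj, hlt⟩, trivial⟩, by simp [edgeArcMap, h]⟩
    · exact ⟨⟨(u, v), (1, 0, j)⟩, ⟨⟨hadj, hlt⟩, trivial⟩, by simp [edgeArcMap, h]⟩
    · exact ⟨⟨(u, v), (1, 1, j)⟩, ⟨⟨hadj, hlt⟩, trivial⟩, by simp [edgeArcMap, h]⟩
  · rintro ⟨⟨⟨u, v⟩, ⟨i, t, j⟩⟩, ⟨⟨hadj, hlt⟩, -⟩, rfl⟩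
    refine ⟨u, v, hadj, hlt, j, ?_⟩
    fin_cases i <;> fin_cases t <;> simp [edgeArcMap]

lemma edgeArcMap_injOn (G : SimpleGraph V) (ℓ : ℕ) :
    Set.InjOn (edgeArcMap V ℓ)
      ({p : V × V | G.Adj p.1 p.2 ∧ p.1 < p.2} ×ˢ (Set.univ : Set (Fin 2 × Fin 2 × Fin ℓ))) := by
  rintro ⟨⟨u, v⟩, ⟨i, t, j⟩⟩ ⟨⟨-, hlt⟩, -⟩ ⟨⟨u', v'⟩, ⟨i', t', j'⟩⟩ ⟨⟨-, hlt'⟩, -⟩ h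
  fin_cases i <;> fin_cases i' <;> fin_cases t <;> fin_cases t' <;>
    simp [edgeArcMap, Prod.ext_iff] at h <;>
    (first
      | (have hOr : u = u' ∧ v = v' ∨ u = v' ∧ v = u' := by tauto
         have hj : j = j' := by tauto
         rcases hOr with ⟨rfl, rfl⟩ | ⟨rfl, rfl⟩
         · subst hj; rfl
         · exact absurd hlt (lt_asymm hlt')))

lemma ncard_edgeArcs (G : SimpleGraph V) (ℓ : ℕ) :
    (edgeArcs G ℓ).ncard = 4 * ℓ * G.edgeSet.ncard := by
  rw [edgeArcs_eq_image, Set.ncard_image_of_injOn (edgeArcMap_injOn G ℓ),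
    ncard_prod_aux _ _ (Set.toFinite _) (Set.toFinite _), ncard_orderedEdges,
    Set.ncard_univ, Nat.card_eq_fintype_card]
  simp only [Fintype.card_prod, Fintype.card_fin]
  ring

end EdgeCount2

section Inject

set_option linter.unusedSectionVars false

variable {V : Type*} [Fintype V] [LinearOrder V] {G : SimpleGraph V} {ℓ : ℕ}

lemma vArcs_union_inj {C C' : Set V} {S S' : Set (GPVertex V ℓ × GPVertex V ℓ)}
    (hS : S ⊆ edgeArcs G ℓ) (hS' : S' ⊆ edgeArcs G ℓ)
    (h : vArcsOf C ℓ ∪ S = vArcsOf C' ℓ ∪ S') : C = C' ∧ S = S' := by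
  have hv : ∀ (C'' : Set V) (S'' : Set (GPVertex V ℓ × GPVertex V ℓ)),
      S'' ⊆ edgeArcs G ℓ → ∀ v : V,
      ((Sum.inl (v, 0), Sum.inl (v, 1)) ∈ vArcsOf C'' ℓ ∪ S'' ↔ v ∈ C'') := by
    intro C'' S'' hS'' v
    constructor
    · rintro (hmem | hmem)
      · exact mem_vArcsOf_iff.1 hmem
      · exact absurd (hS'' hmem)
          (Set.disjoint_left.1 (vertexArcs_disjoint_edgeArcs (G := G)) ⟨v, rfl⟩)
    · exact fun hvC => Or.inl (mem_vArcsOf_iff.2 hvC)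
  have he : ∀ (C'' : Set V) (S'' : Set (GPVertex V ℓ × GPVertex V ℓ)),
      S'' ⊆ edgeArcs G ℓ → ∀ p,
      (p ∈ vArcsOf C'' ℓ ∪ S'' ∧ p ∈ edgeArcs G ℓ ↔ p ∈ S'') := by
    intro C'' S'' hS'' p
    constructor
    · rintro ⟨hmem | hmem, hpe⟩
      · exact absurd hpe (Set.disjoint_left.1 (vertexArcs_disjoint_edgeArcs (G := G))
          (vArcsOf_subset_vertexArcs _ hmem))
      · exact hmem
    · exact fun hp => ⟨Or.inr hp, hS'' hp⟩
  constructor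
  · ext v
    rw [← hv C S hS v, h, hv C' S' hS' v]
  · ext p
    rw [← he C S hS p, h, he C' S' hS' p]

end Inject

/-- for `0 ≤ k < ℓ`, the number of feedback arc sets of `G'(ℓ)` of
cardinality exactly `k` equals
`Σ_{κ=0}^{k} (#vertex covers of G of cardinality κ) · C(4ℓ|E|, k−κ)`,
where `4ℓ|E|` is the total number of edge arcs of `G'(ℓ)`. -/
theorem card_fas_count_eq_sum {V : Type*} [Fintype V] [LinearOrder V]
    (G : SimpleGraph V) (ℓ : ℕ) (hℓ : 1 ≤ ℓ) (k : ℕ) (hk : k < ℓ) :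
    {F : Set (GPVertex V ℓ × GPVertex V ℓ) |
        IsFAS (GPArcs G ℓ) F ∧ F.ncard = k}.ncard =
      ∑ κ ∈ Finset.range (k + 1),
        {C : Set V | IsVC G C ∧ C.ncard = κ}.ncard *
          Nat.choose (4 * ℓ * G.edgeSet.ncard) (k - κ) := by
  classical
  have hcardU : ∀ (C : Set V) (S : Set (GPVertex V ℓ × GPVertex V ℓ)), S ⊆ edgeArcs G ℓ →
      (vArcsOf C ℓ ∪ S).ncard = C.ncard + S.ncard := by
    intro C S hS
    rw [Set.ncard_union_eq (Set.disjoint_of_subset (vArcsOf_subset_vertexArcs C) hS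
      vertexArcs_disjoint_edgeArcs) (Set.toFinite _) (Set.toFinite _), vArcsOf_ncard]
  have hset : {F : Set (GPVertex V ℓ × GPVertex V ℓ) | IsFAS (GPArcs G ℓ) F ∧ F.ncard = k} =
      (fun p : Set V × Set (GPVertex V ℓ × GPVertex V ℓ) => vArcsOf p.1 ℓ ∪ p.2) ''
      {p : Set V × Set (GPVertex V ℓ × GPVertex V ℓ) |
        IsVC G p.1 ∧ p.2 ⊆ edgeArcs G ℓ ∧ p.1.ncard + p.2.ncard = k} := by
    ext F
    simp only [Set.mem_setOf_eq, Set.mem_image]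
    constructor
    · rintro ⟨hFAS, hcard⟩
      obtain ⟨C, S, hC, hS, rfl⟩ := fas_decomp hFAS (by omega)
      refine ⟨(C, S), ⟨hC, hS, ?_⟩, rfl⟩
      rw [← hcardU C S hS]
      exact hcard
    · rintro ⟨⟨C, S⟩, ⟨hC, hS, hsum⟩, rfl⟩
      exact ⟨isFAS_of_vc hC hS, by rw [hcardU C S hS]; exact hsum⟩
  have hinj : Set.InjOn
      (fun p : Set V × Set (GPVertex V ℓ × GPVertex V ℓ) => vArcsOf p.1 ℓ ∪ p.2)
      {p : Set V × Set (GPVertex V ℓ × GPVertex V ℓ) |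
        IsVC G p.1 ∧ p.2 ⊆ edgeArcs G ℓ ∧ p.1.ncard + p.2.ncard = k} := by
    rintro ⟨C, S⟩ ⟨-, hS, -⟩ ⟨C', S'⟩ ⟨-, hS', -⟩ h
    obtain ⟨h1, h2⟩ := vArcs_union_inj (G := G) hS hS' h
    rw [Prod.ext_iff]
    exact ⟨h1, h2⟩
  rw [hset, Set.ncard_image_of_injOn hinj]
  have hP2 : {p : Set V × Set (GPVertex V ℓ × GPVertex V ℓ) |
        IsVC G p.1 ∧ p.2 ⊆ edgeArcs G ℓ ∧ p.1.ncard + p.2.ncard = k} =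
      ⋃ κ ∈ Finset.range (k + 1),
        ({C : Set V | IsVC G C ∧ C.ncard = κ} ×ˢ
          {S : Set (GPVertex V ℓ × GPVertex V ℓ) | S ⊆ edgeArcs G ℓ ∧ S.ncard = k - κ}) := by
    ext ⟨C, S⟩
    simp only [Set.mem_setOf_eq, Set.mem_iUnion, Set.mem_prod, Finset.mem_range]
    constructor
    · rintro ⟨hC, hS, hsum⟩
      exact ⟨C.ncard, by omega, ⟨hC, rfl⟩, hS, by omega⟩
    · rintro ⟨κ, hκ, ⟨hC, hCc⟩, hS, hSc⟩
      exact ⟨hC, hS, by omega⟩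
  rw [hP2, ncard_biUnion_aux _ _ ?_]
  · apply Finset.sum_congr rfl
    intro κ hκ
    rw [ncard_prod_aux _ _ (Set.toFinite _) (Set.toFinite _),
      ncard_subsets_aux _ (Set.toFinite _), ncard_edgeArcs]
  · intro i hi j hj hij
    rw [Set.disjoint_left]
    rintro ⟨C, S⟩ ⟨⟨-, hCi⟩, -⟩ ⟨⟨-, hCj⟩, -⟩
    exact hij (hCi ▸ hCj ▸ rfl)
end

section
/- Let G=(V,A) be a loopless digraph and ℓ ≥ 1. A subset F' of the arcs of the subdivision digraph H'(ℓ) is a feedback arc set of H'(ℓ) if and only if the set {a ∈ A : F' ∩ P_a ≠ ∅} is a feedback arc set of G. -/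
/-- The `i`-th node (for `0 ≤ i ≤ ℓ`) of the subdivision path replacing the arc
`a = (u,v)` in `H'(ℓ)`: node `0` is `u`, node `ℓ` is `v`, and the nodes in
between are the fresh vertices `a_1, …, a_{ℓ-1}`. -/
def HNode {V : Type*} (ℓ : ℕ) (a : V × V) (i : ℕ) : V ⊕ ((V × V) × ℕ) :=
  if i = 0 then Sum.inl a.1 else if i = ℓ then Sum.inl a.2 else Sum.inr (a, i)

/-- The directed path `P_a` of `ℓ` arcs replacing the arc `a = (u,v)` in
`H'(ℓ)`: `(u,a_1), (a_1,a_2), …, (a_{ℓ-2},a_{ℓ-1}), (a_{ℓ-1},v)`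
(for `ℓ = 1`, `P_a = {(u,v)}`). -/
def PathArcs {V : Type*} (ℓ : ℕ) (a : V × V) :
    Set ((V ⊕ ((V × V) × ℕ)) × (V ⊕ ((V × V) × ℕ))) :=
  { p | ∃ i < ℓ, p = (HNode ℓ a i, HNode ℓ a (i + 1)) }

/-- The arc set of the subdivision digraph `H'(ℓ)`: the union of the paths
`P_a` over all arcs `a` of `G`. -/
def HArcs {V : Type*} (A : Set (V × V)) (ℓ : ℕ) :
    Set ((V ⊕ ((V × V) × ℕ)) × (V ⊕ ((V × V) × ℕ))) :=
  ⋃ a ∈ A, PathArcs ℓ a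

open Relation

theorem Relation.TransGen.exists_cycle_through_of_increasing {α : Type*} {r : α → α → Prop}
    (p : α → Prop) (f : α → ℕ) (hf : ∀ x y, r x y → ¬ p x → ¬ p y → f x < f y) {x : α}
    (h : TransGen r x x) : ∃ y, p y ∧ TransGen r y y := by
  by_cases hx : p x
  · exact ⟨x, hx, h⟩
  have key : ∀ z, TransGen r x z →
      (∃ y, p y ∧ ReflTransGen r x y ∧ ReflTransGen r y z) ∨ (¬ p z ∧ f x < f z) := by
    intro z hz
    induction hz with
    | @single z hxz =>
      by_cases hz : p z
      · exact .inl ⟨_, hz, .single hxz, .refl⟩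
      · exact .inr ⟨hz, hf x z hxz hx hz⟩
    | @tail z w hxz hzw ih =>
      rcases ih with ⟨y, hy, hxy, hyz⟩ | ⟨hz, hlt⟩
      · exact .inl ⟨y, hy, hxy, hyz.tail hzw⟩
      by_cases hw : p w
      · exact .inl ⟨w, hw, (hxz.tail hzw).to_reflTransGen, .refl⟩
      · exact .inr ⟨hw, hlt.trans (hf z w hzw hz hw)⟩
  rcases key x h with ⟨y, hy, hxy, hyx⟩ | ⟨-, hlt⟩
  · exact ⟨y, hy, .trans_right hyx (h.trans_left hxy)⟩
  · exact absurd hlt (lt_irrefl _)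

section Subdivision

variable {V : Type*} {A : Set (V × V)} {ℓ : ℕ}
  {F' : Set ((V ⊕ ((V × V) × ℕ)) × (V ⊕ ((V × V) × ℕ)))} {a b : V × V} {i j : ℕ}
  {x y : V ⊕ ((V × V) × ℕ)} {u w : V}

lemma mem_HArcs_iff :
    (x, y) ∈ HArcs A ℓ ↔ ∃ a ∈ A, ∃ i < ℓ, x = HNode ℓ a i ∧ y = HNode ℓ a (i + 1) := by
  simp [HArcs, PathArcs]

lemma HNode_zero : HNode ℓ a 0 = Sum.inl a.1 := by simp [HNode]

lemma HNode_self (hℓ : ℓ ≠ 0) : HNode ℓ a ℓ = Sum.inl a.2 := by simp [HNode, hℓ]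

lemma HNode_eq_inr (h : HNode ℓ a i = Sum.inr (b, j)) : a = b ∧ i = j := by
  unfold HNode at h
  split_ifs at h
  simp_all

lemma HNode_eq_inl (hi : i ≠ 0) (h : HNode ℓ a i = Sum.inl w) : i = ℓ ∧ a.2 = w := by
  unfold HNode at h
  split_ifs at h <;> simp_all

def baseVertex : V ⊕ ((V × V) × ℕ) → V :=
  Sum.elim id fun b => b.1.1

lemma baseVertex_HNode (hi : i ≠ ℓ) : baseVertex (HNode ℓ a i) = a.1 := by
  unfold HNode
  split_ifs <;> simp [baseVertex]

def PathAvoidsUpTo (ℓ : ℕ) (F' : Set ((V ⊕ ((V × V) × ℕ)) × (V ⊕ ((V × V) × ℕ))))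
    (a : V × V) (i : ℕ) : Prop :=
  ∀ j < i, (HNode ℓ a j, HNode ℓ a (j + 1)) ∉ F'

lemma PathAvoidsUpTo.succ (h : PathAvoidsUpTo ℓ F' a i)
    (hi : (HNode ℓ a i, HNode ℓ a (i + 1)) ∉ F') : PathAvoidsUpTo ℓ F' a (i + 1) := by
  intro j hj
  rcases Nat.lt_succ_iff_lt_or_eq.mp hj with hj | rfl
  exacts [h j hj, hi]

def PrefixAvoids (ℓ : ℕ) (F' : Set ((V ⊕ ((V × V) × ℕ)) × (V ⊕ ((V × V) × ℕ)))) :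
    V ⊕ ((V × V) × ℕ) → Prop :=
  Sum.elim (fun _ => True) fun b => PathAvoidsUpTo ℓ F' b.1 b.2

lemma prefixAvoids_HNode_iff (hi : i ≠ ℓ) :
    PrefixAvoids ℓ F' (HNode ℓ a i) ↔ PathAvoidsUpTo ℓ F' a i := by
  unfold HNode
  split_ifs with h0 <;> simp [PrefixAvoids, PathAvoidsUpTo, h0]

def hitArcs (A : Set (V × V)) (ℓ : ℕ)
    (F' : Set ((V ⊕ ((V × V) × ℕ)) × (V ⊕ ((V × V) × ℕ)))) : Set (V × V) :=
  {a | a ∈ A ∧ (F' ∩ PathArcs ℓ a).Nonempty}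

lemma mem_diff_hitArcs_iff : a ∈ A \ hitArcs A ℓ F' ↔ a ∈ A ∧ PathAvoidsUpTo ℓ F' a ℓ :=
  ⟨fun ⟨ha, hnot⟩ => ⟨ha, fun j hj hF => hnot ⟨ha, _, hF, j, hj, rfl⟩⟩,
    fun ⟨ha, h⟩ => ⟨ha, fun ⟨_, _, hF, j, hj, hp⟩ => h j hj (hp ▸ hF)⟩⟩

lemma transGen_inl_of_mem_diff_hitArcs (hℓ : ℓ ≠ 0) (ha : a ∈ A \ hitArcs A ℓ F') :
    TransGen (fun x y => (x, y) ∈ HArcs A ℓ \ F') (Sum.inl a.1) (Sum.inl a.2) := by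
  obtain ⟨ha, havoid⟩ := mem_diff_hitArcs_iff.mp ha
  rw [← HNode_zero (ℓ := ℓ), ← HNode_self hℓ]
  refine (transGen_of_succ_of_lt (fun i j => (HNode ℓ a i, HNode ℓ a j) ∈ HArcs A ℓ \ F')
    (fun i hi => ?_) (Nat.pos_of_ne_zero hℓ)).lift (HNode ℓ a) fun _ _ h => h
  rw [Set.mem_Ico] at hi
  exact ⟨mem_HArcs_iff.mpr ⟨a, ha, i, hi.2, rfl, rfl⟩, havoid i hi.2⟩

lemma acyclic_of_acyclic_subdivision (hℓ : ℓ ≠ 0) (h : Acyclic (HArcs A ℓ \ F')) :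
    Acyclic (A \ hitArcs A ℓ F') := fun _ hv =>
  h _ (hv.lift' Sum.inl fun _ _ huw => transGen_inl_of_mem_diff_hitArcs hℓ huw)

lemma PrefixAvoids.of_arc (hxy : (x, y) ∈ HArcs A ℓ \ F') (hx : PrefixAvoids ℓ F' x) :
    PrefixAvoids ℓ F' y := by
  obtain ⟨a, -, i, hi, rfl, rfl⟩ := mem_HArcs_iff.mp hxy.1
  by_cases hend : i + 1 = ℓ
  · rw [hend, HNode_self (by omega)]
    trivial
  · rw [prefixAvoids_HNode_iff hend]
    exact ((prefixAvoids_HNode_iff hi.ne).mp hx).succ hxy.2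

lemma baseVertex_eq_of_arc_inr (hxy : (x, Sum.inr (b, j)) ∈ HArcs A ℓ) :
    baseVertex x = baseVertex (Sum.inr (b, j)) := by
  obtain ⟨a, -, i, hi, rfl, hy⟩ := mem_HArcs_iff.mp hxy
  obtain ⟨rfl, -⟩ := HNode_eq_inr hy.symm
  exact baseVertex_HNode hi.ne

lemma baseVertex_mem_of_arc_inl (hxy : (x, Sum.inl w) ∈ HArcs A ℓ \ F')
    (hx : PrefixAvoids ℓ F' x) : (baseVertex x, w) ∈ A \ hitArcs A ℓ F' := by
  obtain ⟨a, ha, i, hi, rfl, hy⟩ := mem_HArcs_iff.mp hxy.1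
  obtain ⟨hend, rfl⟩ := HNode_eq_inl (Nat.add_one_ne_zero i) hy.symm
  have havoid := ((prefixAvoids_HNode_iff hi.ne).mp hx).succ (hy ▸ hxy.2)
  rw [hend] at havoid
  exact baseVertex_HNode hi.ne ▸ mem_diff_hitArcs_iff.mpr ⟨ha, havoid⟩

lemma reflTransGen_baseVertex
    (h : ReflTransGen (fun x y => (x, y) ∈ HArcs A ℓ \ F') x y) (hx : PrefixAvoids ℓ F' x) :
    PrefixAvoids ℓ F' y ∧
      ReflTransGen (fun u w => (u, w) ∈ A \ hitArcs A ℓ F') (baseVertex x) (baseVertex y) := by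
  induction h with
  | refl => exact ⟨hx, .refl⟩
  | @tail y z _ hyz ih =>
    refine ⟨ih.1.of_arc hyz, ?_⟩
    rcases z with w | ⟨b, j⟩
    · exact ih.2.tail (baseVertex_mem_of_arc_inl hyz ih.1)
    · exact baseVertex_eq_of_arc_inr hyz.1 ▸ ih.2

lemma transGen_of_transGen_inl
    (h : TransGen (fun x y => (x, y) ∈ HArcs A ℓ \ F') (Sum.inl u) (Sum.inl w)) :
    TransGen (fun u w => (u, w) ∈ A \ hitArcs A ℓ F') u w := by
  obtain ⟨z, huz, hzw⟩ := TransGen.tail'_iff.mp h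
  obtain ⟨hz, huz'⟩ := reflTransGen_baseVertex huz trivial
  exact .tail' huz' (baseVertex_mem_of_arc_inl hzw hz)

lemma lt_of_arc_inr_inr (h : (Sum.inr (a, i), Sum.inr (b, j)) ∈ HArcs A ℓ) : i < j := by
  obtain ⟨c, -, k, -, hx, hy⟩ := mem_HArcs_iff.mp h
  obtain ⟨-, rfl⟩ := HNode_eq_inr hx.symm
  obtain ⟨-, rfl⟩ := HNode_eq_inr hy.symm
  exact k.lt_succ_self

lemma acyclic_subdivision_of_acyclic (h : Acyclic (A \ hitArcs A ℓ F')) :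
    Acyclic (HArcs A ℓ \ F') := by
  have hincr : ∀ x y, (x, y) ∈ HArcs A ℓ \ F' → ¬ x.isLeft → ¬ y.isLeft →
      Sum.elim (fun _ => 0) Prod.snd x < Sum.elim (fun _ => 0) Prod.snd y := by
    rintro (_ | ⟨a, i⟩) (_ | ⟨b, j⟩) hxy hx hy
    · exact (hx rfl).elim
    · exact (hx rfl).elim
    · exact (hy rfl).elim
    · exact lt_of_arc_inr_inr hxy.1
  intro x hx
  obtain ⟨y, hy, hyy⟩ := hx.exists_cycle_through_of_increasing _ _ hincr
  obtain ⟨u, rfl⟩ := Sum.isLeft_iff.mp hy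
  exact h u (transGen_of_transGen_inl hyy)

end Subdivision

theorem fas_subdivision_iff_general {V : Type*} (A : Set (V × V))
    (ℓ : ℕ) (hℓ : 1 ≤ ℓ)
    (F' : Set ((V ⊕ ((V × V) × ℕ)) × (V ⊕ ((V × V) × ℕ))))
    (hF' : F' ⊆ HArcs A ℓ) :
    IsFAS (HArcs A ℓ) F' ↔
      IsFAS A {a : V × V | a ∈ A ∧ (F' ∩ PathArcs ℓ a).Nonempty} :=
  ⟨fun h => ⟨fun _ ha => ha.1, acyclic_of_acyclic_subdivision (by omega) h.2⟩,
    fun h => ⟨hF', acyclic_subdivision_of_acyclic h.2⟩⟩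

/-- a subset `F'` of the arcs of `H'(ℓ)` is a feedback arc set of
`H'(ℓ)` iff `{a ∈ A : F' ∩ P_a ≠ ∅}` is a feedback arc set of `G`. -/
theorem fas_subdivision_iff {V : Type*} [Fintype V] (A : Set (V × V))
    (hloopless : ∀ v : V, (v, v) ∉ A) (ℓ : ℕ) (hℓ : 1 ≤ ℓ)
    (F' : Set ((V ⊕ ((V × V) × ℕ)) × (V ⊕ ((V × V) × ℕ))))
    (hF' : F' ⊆ HArcs A ℓ) :
    IsFAS (HArcs A ℓ) F' ↔
      IsFAS A {a : V × V | a ∈ A ∧ (F' ∩ PathArcs ℓ a).Nonempty} :=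
  fas_subdivision_iff_general A ℓ hℓ F' hF'
end

section
/- Let G=(V,A) be a loopless digraph, ℓ ≥ 1, and let F be a feedback arc set of G. Then the number of feedback arc sets F' of the subdivision digraph H'(ℓ) satisfying {a ∈ A : F' ∩ P_a ≠ ∅} = F is exactly (2^ℓ − 1)^{|F|}. -/
/-!
The arcs of `H'(ℓ)` are indexed injectively by the pairs `(a, i)` with `a ∈ A` and `i < ℓ`.
Hence the arc sets `F' ⊆ H'(ℓ)` meeting exactly the paths `P_a` with `a ∈ F` correspond to the
sets `E ⊆ (V × V) × Fin ℓ` whose first projection is `F`, that is, to a choice of a nonempty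
subset of `Fin ℓ` for every `a ∈ F`: there are `(2 ^ ℓ - 1) ^ |F|` of them.

Each such `F'` is a feedback arc set of `H'(ℓ)`. Order `V` by reachability in the acyclic digraph `G - F` and give
the subdivision vertex `a_i` of `a = (u, v)` the potential `(u, i)` if the arcs of `P_a` before it
avoid `F'`, and `(v, i - ℓ)` otherwise. Every arc of `H'(ℓ) - F'` raises the potential
lexicographically: the first coordinate changes only along the last arc of a path `P_a` that
avoids `F'` entirely, and then `a ∉ F`, so `(u, v)` is an arc of `G - F`.
-/

theorem acyclic_of_potential {W α : Type*} {D : Set (W × W)} (r : α → α → Prop)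
    [IsTrans α r] [Std.Irrefl r] (φ : W → α) (hφ : ∀ x y, (x, y) ∈ D → r (φ x) (φ y)) :
    Acyclic D := fun v hv =>
  irrefl (φ v) (Relation.transGen_eq_self (r := r) ▸ hv.lift φ hφ)

theorem ncard_setOf_image_fst_eq {α β : Type*} [Finite α] [Fintype β] (s : Set α) :
    {E : Set (α × β) | Prod.fst '' E = s}.ncard = (2 ^ Fintype.card β - 1) ^ s.ncard := by
  let e : {E : Set (α × β) | Prod.fst '' E = s} ≃ (s → {t : Set β // t.Nonempty}) :=
    { toFun := fun E a => ⟨{b | (a.1, b) ∈ E.1}, by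
        have hE : Prod.fst '' E.1 = s := E.2
        obtain ⟨⟨_, b⟩, hb, rfl⟩ : a.1 ∈ Prod.fst '' E.1 := by rw [hE]; exact a.2
        exact ⟨b, hb⟩⟩
      invFun := fun f => ⟨{p | ∃ h : p.1 ∈ s, p.2 ∈ (f ⟨p.1, h⟩).1}, by
        ext a
        simp only [Set.mem_image, Prod.exists, exists_and_right, exists_eq_right, Set.mem_ofPred_eq]
        exact ⟨fun ⟨_, ha, _⟩ => ha, fun ha => ⟨_, ha, (f ⟨a, ha⟩).2.some_mem⟩⟩⟩
      left_inv := by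
        rintro ⟨E, hE⟩
        ext ⟨a, b⟩
        simpa using fun hab => hE ▸ Set.mem_image_of_mem Prod.fst hab
      right_inv := fun f => by
        ext a b
        simp }
  classical
  rw [← Nat.card_coe_set_eq, Nat.card_congr e, Nat.card_fun, Nat.card_coe_set_eq]
  simp only [Set.nonempty_iff_ne_empty, Nat.card_eq_fintype_card, Fintype.card_subtype_compl,
    Fintype.card_set, Fintype.card_subtype_eq]

section Subdivision

variable {V : Type*} {ℓ : ℕ}

def subdivisionArc (ℓ : ℕ) (p : (V × V) × Fin ℓ) :
    (V ⊕ ((V × V) × ℕ)) × (V ⊕ ((V × V) × ℕ)) :=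
  (HNode ℓ p.1 p.2, HNode ℓ p.1 (p.2 + 1))

theorem subdivisionArc_injective (ℓ : ℕ) : Function.Injective (subdivisionArc (V := V) ℓ) := by
  rintro ⟨⟨u, v⟩, i, hi⟩ ⟨⟨u', v'⟩, j, hj⟩ h
  simp only [subdivisionArc, HNode, Prod.ext_iff] at h
  obtain ⟨h1, h2⟩ := h
  split_ifs at h1 h2 <;> simp_all

theorem pathArcs_eq_range (ℓ : ℕ) (a : V × V) :
    PathArcs ℓ a = Set.range fun i : Fin ℓ => subdivisionArc ℓ (a, i) := by
  ext p
  simp [PathArcs, subdivisionArc, Fin.exists_iff, eq_comm]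

theorem hArcs_eq_image (A : Set (V × V)) (ℓ : ℕ) :
    HArcs A ℓ = subdivisionArc ℓ '' (Prod.fst ⁻¹' A) := by
  ext p
  simp [HArcs, pathArcs_eq_range]

theorem image_subdivisionArc_subset_hArcs_iff {A : Set (V × V)} {E : Set ((V × V) × Fin ℓ)} :
    subdivisionArc ℓ '' E ⊆ HArcs A ℓ ↔ Prod.fst '' E ⊆ A := by
  rw [hArcs_eq_image, Set.image_subset_image_iff (subdivisionArc_injective ℓ), Set.image_subset_iff]

theorem image_subdivisionArc_inter_pathArcs_nonempty_iff {E : Set ((V × V) × Fin ℓ)}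
    {a : V × V} : (subdivisionArc ℓ '' E ∩ PathArcs ℓ a).Nonempty ↔ a ∈ Prod.fst '' E := by
  rw [pathArcs_eq_range]
  constructor
  · rintro ⟨_, ⟨p, hp, rfl⟩, i, hi⟩
    obtain rfl := subdivisionArc_injective ℓ hi
    exact ⟨_, hp, rfl⟩
  · rintro ⟨⟨a, i⟩, hp, rfl⟩
    exact ⟨_, ⟨_, hp, rfl⟩, i, rfl⟩

theorem setOf_subset_hArcs_hitting_eq_image {A F : Set (V × V)} (hFA : F ⊆ A) (ℓ : ℕ) :
    {F' | F' ⊆ HArcs A ℓ ∧ {a | a ∈ A ∧ (F' ∩ PathArcs ℓ a).Nonempty} = F} =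
      Set.image (subdivisionArc ℓ) '' {E | Prod.fst '' E = F} := by
  have key (E : Set ((V × V) × Fin ℓ)) :
      (subdivisionArc ℓ '' E ⊆ HArcs A ℓ ∧
        {a | a ∈ A ∧ (subdivisionArc ℓ '' E ∩ PathArcs ℓ a).Nonempty} = F) ↔
        Prod.fst '' E = F := by
    simp only [image_subdivisionArc_subset_hArcs_iff,
      image_subdivisionArc_inter_pathArcs_nonempty_iff, Set.sep_mem_eq]
    constructor
    · rintro ⟨hEA, rfl⟩
      exact (Set.inter_eq_right.2 hEA).symm
    · rintro rfl
      exact ⟨hFA, Set.inter_eq_right.2 hFA⟩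
  ext F'
  constructor
  · intro hF'
    have hrange : F' ⊆ Set.range (subdivisionArc ℓ) :=
      hF'.1.trans (hArcs_eq_image A ℓ ▸ Set.image_subset_range _ _)
    rw [← Set.image_preimage_eq_of_subset hrange] at hF'
    exact ⟨_, (key _).1 hF', Set.image_preimage_eq_of_subset hrange⟩
  · rintro ⟨E, hE, rfl⟩
    exact (key E).2 hE

section Potential

open Classical

noncomputable def subdivisionPotential (ℓ : ℕ)
    (F' : Set ((V ⊕ ((V × V) × ℕ)) × (V ⊕ ((V × V) × ℕ)))) : V ⊕ ((V × V) × ℕ) → V × ℤ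
  | .inl u => (u, 0)
  | .inr (b, i) =>
    if ∀ j < i, (HNode ℓ b j, HNode ℓ b (j + 1)) ∉ F' then (b.1, i) else (b.2, i - ℓ)

theorem subdivisionPotential_hNode_of_lt {i : ℕ} (hi : i < ℓ) (F') (b : V × V) :
    subdivisionPotential ℓ F' (HNode ℓ b i) =
      if ∀ j < i, (HNode ℓ b j, HNode ℓ b (j + 1)) ∉ F' then (b.1, (i : ℤ)) else (b.2, i - ℓ) := by
  rcases Nat.eq_zero_or_pos i with rfl | hi0
  · simp [HNode, subdivisionPotential]
  · simp [HNode, subdivisionPotential, hi0.ne', hi.ne]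

theorem subdivisionPotential_hNode_self (hℓ : ℓ ≠ 0) (F') (b : V × V) :
    subdivisionPotential ℓ F' (HNode ℓ b ℓ) = (b.2, 0) := by
  simp [HNode, subdivisionPotential, hℓ]

theorem subdivisionPotential_lex_hNode_succ {A F : Set (V × V)}
    {F' : Set ((V ⊕ ((V × V) × ℕ)) × (V ⊕ ((V × V) × ℕ)))}
    (hF' : ∀ a ∈ F, (F' ∩ PathArcs ℓ a).Nonempty) {b : V × V} (hb : b ∈ A) {i : ℕ}
    (hi : i < ℓ) (hbi : (HNode ℓ b i, HNode ℓ b (i + 1)) ∉ F') :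
    Prod.Lex (Relation.TransGen fun u w => (u, w) ∈ A \ F) (· < ·)
      (subdivisionPotential ℓ F' (HNode ℓ b i)) (subdivisionPotential ℓ F' (HNode ℓ b (i + 1))) := by
  set P : ℕ → Prop := fun k => ∀ j < k, (HNode ℓ b j, HNode ℓ b (j + 1)) ∉ F'
  have hP : P (i + 1) ↔ P i := by
    simp only [P, Nat.forall_lt_succ_right]
    exact and_iff_left hbi
  rw [subdivisionPotential_hNode_of_lt hi]
  rcases (Nat.succ_le_of_lt hi).lt_or_eq with hi' | rfl
  · rw [subdivisionPotential_hNode_of_lt hi']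
    by_cases h : P i
    · rw [if_pos h, if_pos (hP.2 h)]
      exact Prod.Lex.right _ (by omega)
    · rw [if_neg h, if_neg (mt hP.1 h)]
      exact Prod.Lex.right _ (by omega)
  · rw [subdivisionPotential_hNode_self (Nat.succ_ne_zero i)]
    by_cases h : P i
    · have hbF : b ∉ F := fun hbF => by
        obtain ⟨p, hpF', j, hj, rfl⟩ := hF' b hbF
        exact hP.2 h j hj hpF'
      rw [if_pos h]
      exact Prod.Lex.left _ _ (Relation.TransGen.single ⟨hb, hbF⟩)
    · rw [if_neg h]
      exact Prod.Lex.right _ (by omega)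

theorem acyclic_hArcs_diff {A F : Set (V × V)} (hF : Acyclic (A \ F))
    {F' : Set ((V ⊕ ((V × V) × ℕ)) × (V ⊕ ((V × V) × ℕ)))}
    (hF' : ∀ a ∈ F, (F' ∩ PathArcs ℓ a).Nonempty) : Acyclic (HArcs A ℓ \ F') := by
  have : Std.Irrefl (Relation.TransGen fun u w => (u, w) ∈ A \ F) := ⟨hF⟩
  refine acyclic_of_potential (Prod.Lex (Relation.TransGen fun u w => (u, w) ∈ A \ F) (· < ·))
    (subdivisionPotential ℓ F') ?_
  rintro x y ⟨hxy, hxyF'⟩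
  simp only [HArcs, PathArcs, Set.mem_iUnion, Set.mem_ofPred_eq] at hxy
  obtain ⟨b, hb, i, hi, hxy⟩ := hxy
  obtain ⟨rfl, rfl⟩ := Prod.ext_iff.1 hxy
  exact subdivisionPotential_lex_hNode_succ hF' hb hi (hxy ▸ hxyF')

end Potential

end Subdivision

theorem count_fas_over_fas_general {V : Type*} [Fintype V] (A : Set (V × V))
    (ℓ : ℕ) (F : Set (V × V)) (hF : IsFAS A F) :
    {F' : Set ((V ⊕ ((V × V) × ℕ)) × (V ⊕ ((V × V) × ℕ))) |
        IsFAS (HArcs A ℓ) F' ∧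
          {a : V × V | a ∈ A ∧ (F' ∩ PathArcs ℓ a).Nonempty} = F}.ncard =
      (2 ^ ℓ - 1) ^ F.ncard := by
  obtain ⟨hFA, hacyclic⟩ := hF
  have hFAS : {F' : Set ((V ⊕ ((V × V) × ℕ)) × (V ⊕ ((V × V) × ℕ))) |
        IsFAS (HArcs A ℓ) F' ∧ {a : V × V | a ∈ A ∧ (F' ∩ PathArcs ℓ a).Nonempty} = F} =
      {F' | F' ⊆ HArcs A ℓ ∧ {a : V × V | a ∈ A ∧ (F' ∩ PathArcs ℓ a).Nonempty} = F} := by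
    ext F'
    refine ⟨fun ⟨⟨hsub, _⟩, hhit⟩ => ⟨hsub, hhit⟩, fun ⟨hsub, hhit⟩ => ⟨⟨hsub, ?_⟩, hhit⟩⟩
    refine acyclic_hArcs_diff hacyclic fun a ha => ?_
    rw [← hhit] at ha
    exact ha.2
  rw [hFAS, setOf_subset_hArcs_hitting_eq_image hFA,
    Set.ncard_image_of_injective _ (Set.image_injective.2 (subdivisionArc_injective ℓ)),
    ncard_setOf_image_fst_eq, Fintype.card_fin]

/-- for a feedback arc set `F` of `G`, the number of feedback arc
sets `F'` of `H'(ℓ)` with `{a ∈ A : F' ∩ P_a ≠ ∅} = F` is `(2^ℓ − 1)^{|F|}`. -/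
theorem count_fas_over_fas {V : Type*} [Fintype V] (A : Set (V × V))
    (hloopless : ∀ v : V, (v, v) ∉ A) (ℓ : ℕ) (hℓ : 1 ≤ ℓ)
    (F : Set (V × V)) (hF : IsFAS A F) :
    {F' : Set ((V ⊕ ((V × V) × ℕ)) × (V ⊕ ((V × V) × ℕ))) |
        IsFAS (HArcs A ℓ) F' ∧
          {a : V × V | a ∈ A ∧ (F' ∩ PathArcs ℓ a).Nonempty} = F}.ncard =
      (2 ^ ℓ - 1) ^ F.ncard :=
  count_fas_over_fas_general A ℓ F hF
end
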